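/- arXiv:2303.10018 — 8 statements merged into one kernel-verified Lean document; each statement's English description precedes it below -/
import Mathlib

section
/- For every integer p ≥ 2 and every real symmetric Toeplitz p×p matrix Σ (i.e., Σ_{ij} = σ_{|i−j|} for some real numbers σ_0,…,σ_{p−1}), the matrix D Σ D satisfies (D Σ D)_{ij} = 0 for all i, j ∈ {1,…,p} with |i − j| odd, where D is the DCT-I matrix. -/
noncomputable section

/-- The `p × p` discrete cosine transform I matrix (indices `0`-based):
`D_{ij} = a_i a_j √(2/(p-1)) cos(π i j /(p-1))` with `a_s = 1/√2` for `s ∈ {0, p-1}`,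
`a_s = 1` otherwise. -/
def dctI (p : ℕ) : Matrix (Fin p) (Fin p) ℝ :=
  Matrix.of fun i j =>
    (if (i : ℕ) = 0 ∨ (i : ℕ) = p - 1 then (Real.sqrt 2)⁻¹ else 1) *
    (if (j : ℕ) = 0 ∨ (j : ℕ) = p - 1 then (Real.sqrt 2)⁻¹ else 1) *
    Real.sqrt (2 / ((p : ℝ) - 1)) *
    Real.cos (Real.pi * (i : ℕ) * (j : ℕ) / ((p : ℝ) - 1))

lemma dctI_rev (p : ℕ) (hp : 2 ≤ p) (i k : Fin p) :
    dctI p i (Fin.rev k) = (-1) ^ (i : ℕ) * dctI p i k := by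
  have hk := k.isLt
  have hne : (p : ℝ) - 1 ≠ 0 := by
    have : (2 : ℝ) ≤ (p : ℝ) := by exact_mod_cast hp
    linarith
  have hvr : ((Fin.rev k : Fin p) : ℕ) = p - 1 - (k : ℕ) := by
    simp [Fin.val_rev]; omega
  have hcast : (((p - 1 - (k : ℕ) : ℕ)) : ℝ) = (p : ℝ) - 1 - (k : ℕ) := by
    have h1 : (k : ℕ) ≤ p - 1 := by omega
    have h2 : 1 ≤ p := by omega
    push_cast [Nat.cast_sub h1, Nat.cast_sub h2]
    ring
  have hif : ((Fin.rev k : Fin p) : ℕ) = 0 ∨ ((Fin.rev k : Fin p) : ℕ) = p - 1 ↔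
      (k : ℕ) = 0 ∨ (k : ℕ) = p - 1 := by
    rw [hvr]; omega
  simp only [dctI, Matrix.of_apply]
  rw [if_congr hif rfl rfl, hvr, hcast]
  have harg : Real.pi * (i : ℕ) * ((p : ℝ) - 1 - (k : ℕ)) / ((p : ℝ) - 1)
      = (i : ℕ) * Real.pi - Real.pi * (i : ℕ) * (k : ℕ) / ((p : ℝ) - 1) := by
    field_simp
  rw [harg, Real.cos_nat_mul_pi_sub]
  ring

lemma dctI_symm (p : ℕ) (i j : Fin p) : dctI p i j = dctI p j i := by
  simp only [dctI, Matrix.of_apply]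
  rw [mul_comm Real.pi (i : ℝ), mul_assoc, mul_comm ((i:ℕ) : ℝ)]
  ring_nf

/-- for every real symmetric Toeplitz matrix `Σ`, the entries of
`D Σ D` with `|i - j|` odd vanish, where `D` is the DCT-I matrix. -/
theorem dct_toeplitz_odd_entries_zero (p : ℕ) (hp : 2 ≤ p) (σ : ℕ → ℝ)
    (S : Matrix (Fin p) (Fin p) ℝ)
    (hS : ∀ i j : Fin p, S i j = σ ((((i : ℕ) : ℤ) - ((j : ℕ) : ℤ)).natAbs))
    (i j : Fin p) (hodd : Odd (((i : ℕ) : ℤ) - ((j : ℕ) : ℤ))) :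
    (dctI p * S * dctI p) i j = 0 := by
  have key : ∀ k l : Fin p, S (Fin.rev k) (Fin.rev l) = S k l := by
    intro k l
    rw [hS, hS]
    congr 1
    have hk := k.isLt; have hl := l.isLt
    simp [Fin.val_rev]
    omega
  set E := (dctI p * S * dctI p) i j with hE
  have h1 : E = ∑ l, ∑ k, dctI p i k * S k l * dctI p l j := by
    rw [hE, Matrix.mul_apply]
    congr 1; ext l
    rw [Matrix.mul_apply, Finset.sum_mul]
  have h2 : E = (-1) ^ ((i : ℕ) + (j : ℕ)) * E := by
    rw [h1]
    calc ∑ l, ∑ k, dctI p i k * S k l * dctI p l j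
        = ∑ l, ∑ k, dctI p i (Fin.rev k) * S (Fin.rev k) (Fin.rev l) *
            dctI p (Fin.rev l) j := by
          refine (Equiv.sum_comp Fin.revPerm _).symm.trans ?_
          refine Finset.sum_congr rfl fun l _ => ?_
          exact (Equiv.sum_comp Fin.revPerm _).symm
      _ = ∑ l, ∑ k, (-1) ^ ((i : ℕ) + (j : ℕ)) *
            (dctI p i k * S k l * dctI p l j) := by
          refine Finset.sum_congr rfl fun l _ => Finset.sum_congr rfl fun k _ => ?_
          rw [key, dctI_rev p hp i k, dctI_symm p (Fin.rev l) j, dctI_rev p hp j l,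
            dctI_symm p j l, pow_add]
          ring
      _ = (-1) ^ ((i : ℕ) + (j : ℕ)) * ∑ l, ∑ k, dctI p i k * S k l * dctI p l j := by
          simp [Finset.mul_sum]
  have hoddn : Odd ((i : ℕ) + (j : ℕ)) := by
    rcases hodd with ⟨m, hm⟩
    rw [Nat.odd_iff]
    omega
  rw [hoddn.neg_one_pow] at h2
  linarith
end
end

section
/- Let p ≥ 2 be an integer and x_s = (s−1)/(p−1) for s = 1,…,p. For all integers r, j with 1 ≤ r, j ≤ p: if r − j is even then (1/(p−1)) Σ_{s=1}^{p} sin(π(r−1)x_s) cos(π(j−1)x_s) = 0; and if r − j is odd then (1/(p−1)) Σ_{s=1}^{p} sin(π(r−1)x_s) cos(π(j−1)x_s) = (1/(2(p−1))) [cot(π(r−j)/(2p−2)) + cot(π(r+j−2)/(2p−2))], where both cotangent arguments are nonzero multiples of π/(2p−2) that are not integer multiples of π (so the cotangents are well defined). -/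
noncomputable section

open Real Finset

lemma sum_sin_aux (θ : ℝ) (N : ℕ) :
    2 * Real.sin (θ/2) * ∑ t ∈ Finset.range N, Real.sin ((t:ℝ) * θ) =
      Real.cos (θ/2) - Real.cos ((N:ℝ) * θ - θ/2) := by
  induction N with
  | zero => simp
  | succ n ih =>
    rw [Finset.sum_range_succ, mul_add, ih]
    have h := Real.cos_sub_cos ((n:ℝ) * θ - θ/2) (((n:ℝ)+1) * θ - θ/2)
    have e1 : (((n:ℝ)*θ - θ/2) + (((n:ℝ)+1)*θ - θ/2))/2 = (n:ℝ)*θ := by ring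
    have e2 : (((n:ℝ)*θ - θ/2) - (((n:ℝ)+1)*θ - θ/2))/2 = -(θ/2) := by ring
    rw [e1, e2, Real.sin_neg] at h
    push_cast
    nlinarith [h]

lemma sum_sin_even (m : ℤ) (n : ℕ) (hn : 1 ≤ n) (hm : Even m) :
    ∑ t ∈ Finset.range (n+1), Real.sin ((t:ℝ) * (Real.pi * m / n)) = 0 := by
  have hn0 : (n:ℝ) ≠ 0 := by positivity
  set θ : ℝ := Real.pi * m / n with hθ
  have key := sum_sin_aux θ (n+1)
  have hend : ((n:ℝ)+1) * θ - θ/2 = θ/2 + (m:ℝ) * Real.pi := by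
    rw [hθ]; field_simp; ring
  by_cases hs : Real.sin (θ/2) = 0
  · -- θ/2 = kπ, so θ = 2kπ and every term vanishes
    obtain ⟨k, hk⟩ := Real.sin_eq_zero_iff.mp hs
    apply Finset.sum_eq_zero
    intro t _
    have h2 : θ = 2 * ((k:ℝ) * Real.pi) := by linarith [hk]
    have : (t:ℝ) * θ = ((2 * t * k : ℤ) : ℝ) * Real.pi := by
      push_cast
      linear_combination (t:ℝ) * h2
    rw [this, Real.sin_int_mul_pi]
  · have hcos : Real.cos (((n:ℝ)+1) * θ - θ/2) = Real.cos (θ/2) := by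
      rw [hend, Real.cos_add_int_mul_pi, Even.neg_one_zpow hm, one_mul]
    push_cast at key
    rw [hcos] at key
    have h2 : 2 * Real.sin (θ/2) * ∑ t ∈ Finset.range (n+1), Real.sin ((t:ℝ) * θ) = 0 := by
      linarith [key]
    rcases mul_eq_zero.mp h2 with h | h
    · rcases mul_eq_zero.mp h with h' | h'
      · norm_num at h'
      · exact absurd h' hs
    · exact h

lemma sum_sin_odd (m : ℤ) (n : ℕ) (hn : 1 ≤ n) (hm : Odd m) :
    ∑ t ∈ Finset.range (n+1), Real.sin ((t:ℝ) * (Real.pi * m / n)) =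
      Real.cot (Real.pi * m / (2*n)) := by
  have hn0 : (n:ℝ) ≠ 0 := by positivity
  set θ : ℝ := Real.pi * m / n with hθ
  have hhalf : θ/2 = Real.pi * m / (2*n) := by rw [hθ]; ring
  have hs : Real.sin (θ/2) ≠ 0 := by
    intro hs0
    obtain ⟨k, hk⟩ := Real.sin_eq_zero_iff.mp hs0
    rw [hθ] at hk
    have hpi := Real.pi_ne_zero
    field_simp at hk
    have h4 : ((k:ℝ)*(2*(n:ℝ)))*Real.pi = (m:ℝ)*Real.pi := by linear_combination Real.pi * hk
    have h5 : (k:ℝ)*(2*(n:ℝ)) = (m:ℝ) := mul_right_cancel₀ Real.pi_ne_zero h4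
    have hz : k*(2*(n:ℤ)) = m := by exact_mod_cast h5
    have hev : Even m := ⟨k*n, by rw [← hz]; ring⟩
    exact (Int.not_odd_iff_even.mpr hev) hm
  have key := sum_sin_aux θ (n+1)
  have hend : ((n:ℝ)+1) * θ - θ/2 = θ/2 + (m:ℝ) * Real.pi := by
    rw [hθ]; field_simp; ring
  have hcos : Real.cos (((n:ℝ)+1) * θ - θ/2) = -Real.cos (θ/2) := by
    rw [hend, Real.cos_add_int_mul_pi, Odd.neg_one_zpow hm]; ring
  push_cast at key
  rw [hcos] at key
  rw [← hhalf, Real.cot_eq_cos_div_sin]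
  field_simp
  linarith [key]


/-- the discrete sine-cosine sums on the grid
`x_s = (s-1)/(p-1)`, `s = 1, …, p`: they vanish when `r - j` is even, and equal
`(1/(2(p-1))) (cot(π(r-j)/(2p-2)) + cot(π(r+j-2)/(2p-2)))` when `r - j` is odd. -/
theorem sincos_sum (p r j : ℕ) (hp : 2 ≤ p) (hr1 : 1 ≤ r) (hrp : r ≤ p)
    (hj1 : 1 ≤ j) (hjp : j ≤ p) :
    let S : ℝ := (1 / ((p : ℝ) - 1)) * ∑ s ∈ Finset.Icc 1 p,
      Real.sin (Real.pi * ((r : ℝ) - 1) * (((s : ℝ) - 1) / ((p : ℝ) - 1))) *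
      Real.cos (Real.pi * ((j : ℝ) - 1) * (((s : ℝ) - 1) / ((p : ℝ) - 1)))
    (Even ((r : ℤ) - (j : ℤ)) → S = 0) ∧
    (Odd ((r : ℤ) - (j : ℤ)) →
      S = (1 / (2 * ((p : ℝ) - 1))) *
        (Real.cot (Real.pi * ((r : ℝ) - (j : ℝ)) / (2 * (p : ℝ) - 2)) +
         Real.cot (Real.pi * ((r : ℝ) + (j : ℝ) - 2) / (2 * (p : ℝ) - 2)))) := by
  intro S
  set n : ℕ := p - 1 with hn
  have hn1 : 1 ≤ n := by omega
  have hnp : p = n + 1 := by omega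
  have hnR : (n:ℝ) = (p:ℝ) - 1 := by
    rw [hnp]; push_cast; ring
  have hnR0 : (n:ℝ) ≠ 0 := by positivity
  set m1 : ℤ := (r:ℤ) - j with hm1
  set m2 : ℤ := (r:ℤ) + j - 2 with hm2
  have hm1R : ((m1:ℝ)) = (r:ℝ) - j := by push_cast [hm1]; ring
  have hm2R : ((m2:ℝ)) = (r:ℝ) + j - 2 := by push_cast [hm2]; ring
  -- rewrite the sum
  have hsum : ∑ s ∈ Finset.Icc 1 p,
      Real.sin (Real.pi * ((r : ℝ) - 1) * (((s : ℝ) - 1) / ((p : ℝ) - 1))) *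
      Real.cos (Real.pi * ((j : ℝ) - 1) * (((s : ℝ) - 1) / ((p : ℝ) - 1)))
      = (1/2) * ((∑ t ∈ Finset.range (n+1), Real.sin ((t:ℝ) * (Real.pi * m2 / n)))
          + ∑ t ∈ Finset.range (n+1), Real.sin ((t:ℝ) * (Real.pi * m1 / n))) := by
    rw [← Finset.Ico_add_one_right_eq_Icc, Finset.sum_Ico_eq_sum_range]
    have hcard : p + 1 - 1 = n + 1 := by omega
    rw [hcard, ← Finset.sum_add_distrib, Finset.mul_sum]
    apply Finset.sum_congr rfl
    intro t _
    set A : ℝ := Real.pi * ((r : ℝ) - 1) * ((((1+t : ℕ):ℝ) - 1) / ((p : ℝ) - 1)) with hA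
    set B : ℝ := Real.pi * ((j : ℝ) - 1) * ((((1+t : ℕ):ℝ) - 1) / ((p : ℝ) - 1)) with hB
    have h2 : A + B = (t:ℝ) * (Real.pi * (m2:ℝ) / n) := by
      rw [hA, hB, hm2R, hnR]
      push_cast
      have : (p:ℝ) - 1 ≠ 0 := by rw [← hnR]; exact hnR0
      field_simp
      ring
    have h3 : A - B = (t:ℝ) * (Real.pi * (m1:ℝ) / n) := by
      rw [hA, hB, hm1R, hnR]
      push_cast
      have : (p:ℝ) - 1 ≠ 0 := by rw [← hnR]; exact hnR0
      field_simp
      ring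
    rw [← h2, ← h3, Real.sin_add, Real.sin_sub]
    ring
  -- parity transfer
  have hpar : Even m1 ↔ Even m2 := by
    constructor <;> intro ⟨k, hk⟩
    · exact ⟨k + j - 1, by omega⟩
    · exact ⟨k - j + 1, by omega⟩
  constructor
  · intro hev
    have e1 := sum_sin_even m1 n hn1 hev
    have e2 := sum_sin_even m2 n hn1 (hpar.mp hev)
    show (1 / ((p : ℝ) - 1)) * _ = 0
    rw [hsum, e1, e2]
    ring
  · intro hodd
    have hodd2 : Odd m2 := by
      rcases Int.even_or_odd m2 with h | h
      · exact absurd (hpar.mpr h) (Int.not_even_iff_odd.mpr hodd)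
      · exact h
    have e1 := sum_sin_odd m1 n hn1 hodd
    have e2 := sum_sin_odd m2 n hn1 hodd2
    show (1 / ((p : ℝ) - 1)) * _ =
      (1 / (2 * ((p : ℝ) - 1))) *
        (Real.cot (Real.pi * ((r : ℝ) - (j : ℝ)) / (2 * (p : ℝ) - 2)) +
         Real.cot (Real.pi * ((r : ℝ) + (j : ℝ) - 2) / (2 * (p : ℝ) - 2)))
    have a1 : Real.pi * (m1:ℝ) / (2*(n:ℝ)) = Real.pi * ((r : ℝ) - (j : ℝ)) / (2 * (p : ℝ) - 2) := by
      rw [hm1R, hnR]; ring_nf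
    have a2 : Real.pi * (m2:ℝ) / (2*(n:ℝ)) = Real.pi * ((r : ℝ) + (j : ℝ) - 2) / (2 * (p : ℝ) - 2) := by
      rw [hm2R, hnR]; ring_nf
    rw [hsum, e1, e2, a1, a2]
    have hpR : (p:ℝ) - 1 ≠ 0 := by rw [← hnR]; exact hnR0
    set X := Real.cot (Real.pi * ((r : ℝ) - (j : ℝ)) / (2 * (p : ℝ) - 2))
    set Y := Real.cot (Real.pi * ((r : ℝ) + (j : ℝ) - 2) / (2 * (p : ℝ) - 2))
    field_simp
    ring
end
end

section
/- For every odd positive integer l, the series Σ_{x=1}^{∞} (2x)² / ((2x−l)² (2x+l)²) converges and equals π²/16. -/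
open Finset Filter Topology

lemma hasSum_odd_sq_inv : HasSum (fun k : ℕ => (1:ℝ) / (2*(k:ℝ)+1)^2) (Real.pi ^ 2 / 8) := by
  have h := hasSum_zeta_two
  have he : HasSum (fun k : ℕ => (1:ℝ) / ((2*k : ℕ):ℝ) ^ 2) (Real.pi ^ 2 / 6 / 4) := by
    have h4 := h.mul_left (1/4)
    have e : (Real.pi ^ 2 / 6 / 4) = 1/4 * (Real.pi ^2/6) := by ring
    rw [e]
    refine HasSum.congr_fun h4 fun k => ?_
    push_cast
    rcases eq_or_ne (k:ℝ) 0 with hk | hk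
    · simp [hk]
    · field_simp
      ring
  have hso : Summable (fun k : ℕ => (1:ℝ) / ((2*k+1 : ℕ):ℝ) ^ 2) := by
    have hinj : Function.Injective (fun k : ℕ => 2*k+1) := fun a b hab => by
      simp only [] at hab; omega
    exact h.summable.comp_injective hinj
  obtain ⟨b, hb⟩ := hso
  have htot : HasSum (fun n : ℕ => (1:ℝ)/(n:ℝ)^2) (Real.pi ^ 2 / 6 / 4 + b) :=
    HasSum.even_add_odd (f := fun n : ℕ => (1:ℝ)/(n:ℝ)^2) he hb
  have hb8 : b = Real.pi ^ 2 / 8 := by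
    have := h.unique htot
    linarith
  rw [hb8] at hb
  refine HasSum.congr_fun hb fun k => ?_
  push_cast
  ring

set_option maxHeartbeats 2000000 in
/-- for every odd positive integer `l`,
`Σ_{x=1}^∞ (2x)² / ((2x-l)²(2x+l)²) = π²/16`. -/
theorem sum_even_sq_over_odd_shifts (l : ℕ) (hl : Odd l) (hl0 : 0 < l) :
    HasSum (fun n : ℕ =>
      ((2 * ((n : ℝ) + 1)) ^ 2) /
        (((2 * ((n : ℝ) + 1) - (l : ℝ)) ^ 2) * ((2 * ((n : ℝ) + 1) + (l : ℝ)) ^ 2)))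
      (Real.pi ^ 2 / 16) := by
  obtain ⟨m, hm⟩ := hl
  have hw : HasSum (fun k : ℕ => (1:ℝ) / (2*(k:ℝ)+1)^2) (Real.pi ^ 2 / 8) :=
    hasSum_odd_sq_inv
  set w : ℕ → ℝ := fun k => (1:ℝ) / (2*(k:ℝ)+1)^2 with hw_def
  have hlR : (l:ℝ) = 2*(m:ℝ)+1 := by rw [hm]; push_cast; ring
  have hlne : (l:ℝ) ≠ 0 := by
    rw [hlR]; positivity
  set A : ℕ → ℝ := fun n => ((2*(n:ℝ)+2 - (l:ℝ))^2)⁻¹ with hA_def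
  set B : ℕ → ℝ := fun n => ((2*(n:ℝ)+2 + (l:ℝ))^2)⁻¹ with hB_def
  set h : ℕ → ℝ := fun n => (2*(n:ℝ)+2 - (l:ℝ))⁻¹ with hh_def
  have hne1 : ∀ n : ℕ, 2*(n:ℝ)+2 - (l:ℝ) ≠ 0 := by
    intro n hc
    have h1 : (l:ℝ) = ((2*n+2 : ℕ):ℝ) := by push_cast; linarith
    have h2 : l = 2*n+2 := Nat.cast_injective h1
    omega
  have hne2 : ∀ n : ℕ, 2*(n:ℝ)+2 + (l:ℝ) ≠ 0 := by
    intro n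
    positivity
  -- the sum of A
  have hA : HasSum A (Real.pi ^ 2 / 8 + ∑ i ∈ range m, w i) := by
    have h1 : ∀ n : ℕ, A (n+m) = w n := by
      intro n
      simp only [hA_def, hw_def, one_div]
      push_cast [hlR]
      congr 1
      ring
    have h2 : HasSum (fun n => A (n+m)) (Real.pi ^ 2 / 8) := HasSum.congr_fun hw h1
    have h3 := (hasSum_nat_add_iff (f := A) m).mp h2
    have h4 : ∑ i ∈ range m, A i = ∑ i ∈ range m, w i := by
      rw [← Finset.sum_range_reflect w m]
      refine Finset.sum_congr rfl fun i hi => ?_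
      have hi' : i < m := mem_range.mp hi
      simp only [hA_def, hw_def, one_div]
      have hc : ((m-1-i:ℕ):ℝ) = (m:ℝ)-1-(i:ℝ) := by
        rw [show m-1-i = m-(1+i) from by omega, Nat.cast_sub (by omega)]
        push_cast; ring
      rw [hc, hlR]
      congr 1
      ring
    rwa [h4] at h3
  -- the sum of B
  have hB : HasSum B (Real.pi ^ 2 / 8 - ∑ i ∈ range (m+1), w i) := by
    have k2 : HasSum (fun n => w (n+(m+1))) (Real.pi ^ 2 / 8 - ∑ i ∈ range (m+1), w i) := by
      refine (hasSum_nat_add_iff (f := w) (m+1)).mpr ?_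
      rw [sub_add_cancel]
      exact hw
    refine HasSum.congr_fun k2 fun n => ?_
    simp only [hB_def, hw_def, one_div]
    push_cast [hlR]
    congr 1
    ring
  -- combined even part
  have hU : HasSum (fun n => (1/4) * (A n + B n))
      (Real.pi ^ 2 / 16 - 1/(4*(2*(m:ℝ)+1)^2)) := by
    have h0 := (hA.add hB).mul_left (1/4)
    have e : (1/4) * ((Real.pi ^ 2 / 8 + ∑ i ∈ range m, w i) +
        (Real.pi ^ 2 / 8 - ∑ i ∈ range (m+1), w i)) =
        Real.pi ^ 2 / 16 - 1/(4*(2*(m:ℝ)+1)^2) := by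
      rw [Finset.sum_range_succ]
      simp only [hw_def]
      have hmne : (2*(m:ℝ)+1) ≠ 0 := by positivity
      field_simp
      ring
    rwa [e] at h0
  -- the telescoping part
  have hD : ∀ n : ℕ, h n - h (n+l) = 2*(l:ℝ) * ((2*(n:ℝ)+2-(l:ℝ))*(2*(n:ℝ)+2+(l:ℝ)))⁻¹ := by
    intro n
    simp only [hh_def]
    push_cast
    rw [show 2*((n:ℝ)+(l:ℝ))+2-(l:ℝ) = 2*(n:ℝ)+2+(l:ℝ) by ring]
    rw [inv_eq_one_div, inv_eq_one_div, inv_eq_one_div]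
    rw [div_sub_div _ _ (hne1 n) (hne2 n), mul_one_div, div_eq_div_iff
      (mul_ne_zero (hne1 n) (hne2 n)) (mul_ne_zero (hne1 n) (hne2 n))]
    ring
  set d : ℕ → ℝ := fun n => h n - h (n+l) with hd_def
  -- summability of the telescoping part
  have hsum2 : Summable (fun n : ℕ => (1:ℝ)/((n+1 : ℕ):ℝ)^2) :=
    (summable_nat_add_iff (f := fun n : ℕ => (1:ℝ)/(n:ℝ)^2) 1).mpr hasSum_zeta_two.summable
  have hl1 : (1:ℝ) ≤ (l:ℝ) := by exact_mod_cast hl0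
  have hdsum : Summable d := by
    apply (summable_nat_add_iff (f := d) l).mp
    refine Summable.of_nonneg_of_le (f := fun n : ℕ => 2*(l:ℝ) * (1/((n+1 : ℕ):ℝ)^2))
      ?_ ?_ (hsum2.mul_left (2*(l:ℝ)))
    · intro n
      rw [hd_def]
      simp only []
      rw [hD (n+l)]
      push_cast
      have hp1 : (0:ℝ) < 2*((n:ℝ)+(l:ℝ))+2-(l:ℝ) := by linarith [Nat.cast_nonneg (α := ℝ) n]
      have hp2 : (0:ℝ) < 2*((n:ℝ)+(l:ℝ))+2+(l:ℝ) := by linarith [Nat.cast_nonneg (α := ℝ) n]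
      positivity
    · intro n
      rw [hd_def]
      simp only []
      rw [hD (n+l)]
      push_cast
      have hn0 : (0:ℝ) ≤ (n:ℝ) := Nat.cast_nonneg n
      have hp1 : (0:ℝ) < 2*((n:ℝ)+(l:ℝ))+2-(l:ℝ) := by linarith
      have hp2 : (0:ℝ) < 2*((n:ℝ)+(l:ℝ))+2+(l:ℝ) := by linarith
      rw [← div_eq_mul_inv, mul_one_div, div_le_div_iff₀ (by positivity) (by positivity)]
      have key : ((n:ℝ)+1)^2 ≤ (2*((n:ℝ)+(l:ℝ))+2-(l:ℝ)) * (2*((n:ℝ)+(l:ℝ))+2+(l:ℝ)) := by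
        nlinarith
      calc 2*(l:ℝ) * ((n:ℝ)+1)^2 ≤ 2*(l:ℝ) * ((2*((n:ℝ)+(l:ℝ))+2-(l:ℝ)) * (2*((n:ℝ)+(l:ℝ))+2+(l:ℝ))) := by
            apply mul_le_mul_of_nonneg_left key (by linarith)
        _ = _ := by ring
  -- the value of the finite symmetric sum
  have hC : ∑ n ∈ range l, h n = (l:ℝ)⁻¹ := by
    have hz : ∑ n ∈ range (l-1), h n = 0 := by
      have hr := Finset.sum_range_reflect h (l-1)
      have hneg : ∀ j ∈ range (l-1), h (l-1-1-j) = - h j := by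
        intro j hj
        have hj' : j < l-1 := mem_range.mp hj
        simp only [hh_def]
        have hc : ((l-1-1-j : ℕ):ℝ) = (l:ℝ)-2-(j:ℝ) := by
          rw [show l-1-1-j = l-(2+j) from by omega, Nat.cast_sub (by omega)]
          push_cast; ring
        rw [hc, ← inv_neg]
        congr 1
        ring
      rw [Finset.sum_congr rfl hneg, Finset.sum_neg_distrib] at hr
      linarith
    have hstep : ∑ n ∈ range ((l-1)+1), h n = ∑ n ∈ range (l-1), h n + h (l-1) :=
      Finset.sum_range_succ h (l-1)
    rw [show (l-1)+1 = l from by omega] at hstep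
    have hlast : h (l-1) = (l:ℝ)⁻¹ := by
      simp only [hh_def]
      rw [Nat.cast_sub hl0]
      congr 1
      push_cast
      ring
    rw [hstep, hz, zero_add, hlast]
  -- HasSum of the telescoping part
  have hdS : HasSum d ((l:ℝ)⁻¹) := by
    rw [hdsum.hasSum_iff_tendsto_nat]
    have key : ∀ N : ℕ, ∑ n ∈ range N, d n
        = ∑ n ∈ range l, h n - ∑ n ∈ range l, h (N+n) := by
      intro N
      have e1 := Finset.sum_range_add h N l
      have e2 := Finset.sum_range_add h l N
      have e3 : ∑ n ∈ range N, d n = ∑ n ∈ range N, h n - ∑ n ∈ range N, h (n+l) :=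
        Finset.sum_sub_distrib h (fun n => h (n+l))
      have e4 : ∑ n ∈ range N, h (n+l) = ∑ n ∈ range N, h (l+n) :=
        Finset.sum_congr rfl fun i _ => by rw [Nat.add_comm]
      rw [Nat.add_comm N l] at e1
      rw [e3, e4]
      linarith
    simp only [key, hC]
    have hterm : ∀ n : ℕ, Tendsto (fun N : ℕ => h (N+n)) atTop (𝓝 0) := by
      intro n
      have t1 : Tendsto (fun N : ℕ => 2*((N+n : ℕ):ℝ)+2-(l:ℝ)) atTop atTop := by
        have t2 : Tendsto (fun N : ℕ => 2*(N:ℝ) + (2*(n:ℝ)+2-(l:ℝ))) atTop atTop :=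
          tendsto_atTop_add_const_right _ _
            (Tendsto.const_mul_atTop two_pos tendsto_natCast_atTop_atTop)
        refine t2.congr fun N => ?_
        push_cast
        ring
      exact tendsto_inv_atTop_zero.comp t1
    have hts : Tendsto (fun N : ℕ => ∑ n ∈ range l, h (N+n)) atTop (𝓝 0) := by
      have := tendsto_finset_sum (range l) (fun n _ => hterm n)
      simpa using this
    have final := (tendsto_const_nhds (x := (l:ℝ)⁻¹) (f := atTop)).sub hts
    simpa using final
  -- assemble
  have hV := hdS.mul_left ((4*(l:ℝ))⁻¹)
  have hFinal := hU.add hV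
  have hval : Real.pi ^ 2 / 16 - 1/(4*(2*(m:ℝ)+1)^2) + (4*(l:ℝ))⁻¹ * (l:ℝ)⁻¹
      = Real.pi ^ 2 / 16 := by
    rw [hlR]
    have hmne : (2*(m:ℝ)+1) ≠ 0 := by positivity
    field_simp
    ring
  rw [hval] at hFinal
  refine HasSum.congr_fun hFinal fun n => ?_
  rw [hd_def]
  simp only [hA_def, hB_def, hh_def]
  rw [show ((n+l:ℕ):ℝ) = (n:ℝ)+(l:ℝ) from by push_cast; ring]
  have a1 := hne1 n
  have a2 := hne2 n
  rw [show 2*((n:ℝ)+(l:ℝ))+2-(l:ℝ) = 2*(n:ℝ)+2+(l:ℝ) from by ring]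
  have e2 : 2 * ((n:ℝ) + 1) - (l:ℝ) = 2*(n:ℝ)+2-(l:ℝ) := by ring
  have e3 : 2 * ((n:ℝ) + 1) + (l:ℝ) = 2*(n:ℝ)+2+(l:ℝ) := by ring
  rw [e2, e3]
  have a3 : 2*((n:ℝ)+1)-(l:ℝ) ≠ 0 := by rw [e2]; exact a1
  have a4 : 2*((n:ℝ)+1)+(l:ℝ) ≠ 0 := by rw [e3]; exact a2
  field_simp
  ring
end

section
/- For every even positive integer l, the series Σ_{x=1}^{∞} (2x−1)² / ((2x−1−l)² (2x−1+l)²) converges and equals π²/16. -/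
open Finset Filter Real Topology

private lemma cast_odd_ne (n k : ℕ) : 2 * (n : ℝ) + 1 - 2 * (k : ℝ) ≠ 0 := by
  intro h
  have h2 : ((2 * n + 1 : ℕ) : ℝ) = ((2 * k : ℕ) : ℝ) := by push_cast; linarith
  have := Nat.cast_injective (R := ℝ) h2
  omega

private lemma basel_odd :
    HasSum (fun n : ℕ => 1 / (2 * (n : ℝ) + 1) ^ 2) (Real.pi ^ 2 / 8) := by
  have h := hasSum_zeta_two
  have heven : HasSum (fun n : ℕ => (1 : ℝ) / ((2 * n : ℕ) : ℝ) ^ 2) (Real.pi ^ 2 / 24) := by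
    have h4 := h.mul_left (1 / 4)
    have e : (fun n : ℕ => (1 : ℝ) / ((2 * n : ℕ) : ℝ) ^ 2)
        = fun n : ℕ => (1 / 4) * ((1 : ℝ) / (n : ℝ) ^ 2) := by
      funext n; push_cast; ring
    rw [e]
    convert h4 using 1
    · rfl
    · ring
  have hodds : Summable (fun n : ℕ => (1 : ℝ) / ((2 * n + 1 : ℕ) : ℝ) ^ 2) :=
    h.summable.comp_injective (fun a b hab => by omega)
  obtain ⟨c, hodd⟩ := hodds
  have key := HasSum.even_add_odd (f := fun n : ℕ => (1 : ℝ) / (n : ℝ) ^ 2) heven hodd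
  have huniq := key.unique h
  have hc : c = Real.pi ^ 2 / 8 := by linarith
  have hfun : (fun n : ℕ => 1 / (2 * (n : ℝ) + 1) ^ 2)
      = fun n : ℕ => (1 : ℝ) / ((2 * n + 1 : ℕ) : ℝ) ^ 2 := by
    funext n; push_cast; ring
  rw [hfun, ← hc]
  exact hodd

private noncomputable def uu (k n : ℕ) : ℝ := 1 / (2 * (n : ℝ) + 1 - 2 * (k : ℝ))

private lemma uu_sum_zero (k : ℕ) : ∑ i ∈ range (2 * k), uu k i = 0 := by
  have hrefl := Finset.sum_range_reflect (uu k) (2 * k)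
  have hneg : ∑ j ∈ range (2 * k), uu k (2 * k - 1 - j)
      = ∑ j ∈ range (2 * k), (-(uu k j)) := by
    apply Finset.sum_congr rfl
    intro j hj
    have hj' : j < 2 * k := Finset.mem_range.mp hj
    have hcast : ((2 * k - 1 - j : ℕ) : ℝ) = 2 * (k : ℝ) - 1 - (j : ℝ) := by
      rw [Nat.sub_sub, Nat.cast_sub (by omega : 1 + j ≤ 2 * k)]
      push_cast; ring
    show uu k (2 * k - 1 - j) = -(uu k j)
    unfold uu
    rw [hcast, show 2 * (2 * (k : ℝ) - 1 - (j : ℝ)) + 1 - 2 * (k : ℝ)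
        = -(2 * (j : ℝ) + 1 - 2 * (k : ℝ)) from by ring,
      one_div_neg_eq_neg_one_div]
  rw [hneg, Finset.sum_neg_distrib] at hrefl
  linarith

private lemma partial_sum_cross (k N : ℕ) :
    ∑ n ∈ range N, (uu k n - uu k (n + 2 * k))
      = - ∑ x ∈ range (2 * k), uu k (N + x) := by
  have e1 := Finset.sum_range_add (uu k) (2 * k) N
  have e2 := Finset.sum_range_add (uu k) N (2 * k)
  have e3 : ∑ x ∈ range N, uu k (x + 2 * k) = ∑ x ∈ range N, uu k (2 * k + x) := by
    apply Finset.sum_congr rfl; intro i _; rw [Nat.add_comm]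
  rw [Nat.add_comm (2 * k) N] at e1
  rw [Finset.sum_sub_distrib, e3]
  have h0 := uu_sum_zero k
  linarith

private lemma tendsto_uu (k x : ℕ) :
    Tendsto (fun N : ℕ => uu k (N + x)) atTop (𝓝 0) := by
  apply squeeze_zero_norm' (a := fun N : ℕ => 1 / (N : ℝ))
  · filter_upwards [eventually_ge_atTop (2 * k + 1)] with N hN
    have hN0 : (0 : ℝ) < (N : ℝ) := by exact_mod_cast (by omega : 0 < N)
    have hd : (N : ℝ) ≤ 2 * ((N + x : ℕ) : ℝ) + 1 - 2 * (k : ℝ) := by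
      have : (2 * k + 1 : ℝ) ≤ (N : ℝ) := by exact_mod_cast hN
      push_cast; linarith [Nat.cast_nonneg (α := ℝ) x]
    have hdpos : (0 : ℝ) < 2 * ((N + x : ℕ) : ℝ) + 1 - 2 * (k : ℝ) := lt_of_lt_of_le hN0 hd
    rw [show uu k (N + x) = 1 / (2 * ((N + x : ℕ) : ℝ) + 1 - 2 * (k : ℝ)) from rfl,
      Real.norm_eq_abs, abs_of_pos (one_div_pos.mpr hdpos)]
    exact one_div_le_one_div_of_le hN0 hd
  · exact tendsto_one_div_atTop_nhds_zero_nat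

private lemma summable_cross (k : ℕ) (hk : 1 ≤ k) :
    Summable (fun n : ℕ =>
      (1 / 2) * (1 / ((2 * (n : ℝ) + 1 - 2 * (k : ℝ)) * (2 * (n : ℝ) + 1 + 2 * (k : ℝ))))) := by
  rw [← summable_nat_add_iff (2 * k)]
  have hbase : Summable (fun n : ℕ => (1 : ℝ) / ((n : ℝ) + 1) ^ 2) := by
    have := (summable_nat_add_iff 1).mpr hasSum_zeta_two.summable
    apply this.congr
    intro n; push_cast; ring
  have hk' : (1 : ℝ) ≤ (k : ℝ) := by exact_mod_cast hk
  have hA : ∀ n : ℕ, ((n : ℝ) + 1) ≤ 2 * ((n + 2 * k : ℕ) : ℝ) + 1 - 2 * (k : ℝ) := by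
    intro n; push_cast; linarith [Nat.cast_nonneg (α := ℝ) n]
  have hB : ∀ n : ℕ, ((n : ℝ) + 1) ≤ 2 * ((n + 2 * k : ℕ) : ℝ) + 1 + 2 * (k : ℝ) := by
    intro n; push_cast; linarith [Nat.cast_nonneg (α := ℝ) n]
  have hn1 : ∀ n : ℕ, (0 : ℝ) < (n : ℝ) + 1 := fun n => by positivity
  have hApos : ∀ n : ℕ, (0 : ℝ) < 2 * ((n + 2 * k : ℕ) : ℝ) + 1 - 2 * (k : ℝ) :=
    fun n => lt_of_lt_of_le (hn1 n) (hA n)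
  have hBpos : ∀ n : ℕ, (0 : ℝ) < 2 * ((n + 2 * k : ℕ) : ℝ) + 1 + 2 * (k : ℝ) :=
    fun n => lt_of_lt_of_le (hn1 n) (hB n)
  apply Summable.of_nonneg_of_le _ _ hbase
  · intro n
    exact le_of_lt (mul_pos (by norm_num)
      (one_div_pos.mpr (mul_pos (hApos n) (hBpos n))))
  · intro n
    calc (1 / 2) * (1 / ((2 * ((n + 2 * k : ℕ) : ℝ) + 1 - 2 * (k : ℝ))
            * (2 * ((n + 2 * k : ℕ) : ℝ) + 1 + 2 * (k : ℝ))))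
        ≤ 1 * (1 / (((n : ℝ) + 1) * ((n : ℝ) + 1))) := by
          apply mul_le_mul (by norm_num)
          · apply one_div_le_one_div_of_le (by positivity)
            exact mul_le_mul (hA n) (hB n) (le_of_lt (hn1 n)) (le_of_lt (hApos n))
          · exact le_of_lt (one_div_pos.mpr (mul_pos (hApos n) (hBpos n)))
          · norm_num
      _ = 1 / ((n : ℝ) + 1) ^ 2 := by ring

private lemma hasSum_cross (k : ℕ) (hk : 1 ≤ k) :
    HasSum (fun n : ℕ =>
      (1 / 2) * (1 / ((2 * (n : ℝ) + 1 - 2 * (k : ℝ)) * (2 * (n : ℝ) + 1 + 2 * (k : ℝ))))) 0 := by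
  have hs := summable_cross k hk
  have hkR : (0 : ℝ) < (k : ℝ) := by exact_mod_cast hk
  have hterm_eq : ∀ n : ℕ,
      (1 / 2) * (1 / ((2 * (n : ℝ) + 1 - 2 * (k : ℝ)) * (2 * (n : ℝ) + 1 + 2 * (k : ℝ))))
        = (1 / (8 * (k : ℝ))) * (uu k n - uu k (n + 2 * k)) := by
    intro n
    have h1 := cast_odd_ne n k
    have h2 : (2 * (n : ℝ) + 1 + 2 * (k : ℝ)) ≠ 0 := by positivity
    unfold uu
    have hcast : 2 * ((n + 2 * k : ℕ) : ℝ) + 1 - 2 * (k : ℝ) = 2 * (n : ℝ) + 1 + 2 * (k : ℝ) := by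
      push_cast; ring
    rw [hcast]
    field_simp
    ring
  -- partial sums tend to 0
  have htend : Tendsto (fun N : ℕ => ∑ n ∈ range N,
      (1 / 2) * (1 / ((2 * (n : ℝ) + 1 - 2 * (k : ℝ)) * (2 * (n : ℝ) + 1 + 2 * (k : ℝ)))))
      atTop (𝓝 0) := by
    have hps : ∀ N : ℕ, ∑ n ∈ range N,
        (1 / 2) * (1 / ((2 * (n : ℝ) + 1 - 2 * (k : ℝ)) * (2 * (n : ℝ) + 1 + 2 * (k : ℝ))))
          = (1 / (8 * (k : ℝ))) * (- ∑ x ∈ range (2 * k), uu k (N + x)) := by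
      intro N
      rw [Finset.sum_congr rfl (fun n _ => hterm_eq n), ← Finset.mul_sum,
        partial_sum_cross k N]
    have hR : Tendsto (fun N : ℕ => ∑ x ∈ range (2 * k), uu k (N + x)) atTop (𝓝 0) := by
      have := tendsto_finset_sum (range (2 * k))
        (fun x _ => tendsto_uu k x)
      simpa using this
    have := (hR.neg.const_mul (1 / (8 * (k : ℝ))))
    simp only [neg_zero, mul_zero] at this
    exact Tendsto.congr (fun N => (hps N).symm) this
  have h1 := hs.hasSum.tendsto_sum_nat
  have h2 := tendsto_nhds_unique h1 htend
  rw [← h2]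
  exact hs.hasSum

private lemma hasSum_p (k : ℕ) :
    HasSum (fun n : ℕ => 1 / (2 * (n : ℝ) + 1 - 2 * (k : ℝ)) ^ 2)
      (Real.pi ^ 2 / 8 + ∑ i ∈ range k, 1 / (2 * (i : ℝ) + 1 - 2 * (k : ℝ)) ^ 2) := by
  refine (hasSum_nat_add_iff (f := fun n : ℕ => 1 / (2 * (n : ℝ) + 1 - 2 * (k : ℝ)) ^ 2) k).mp ?_
  have : (fun n : ℕ => 1 / (2 * ((n + k : ℕ) : ℝ) + 1 - 2 * (k : ℝ)) ^ 2)
      = fun n : ℕ => 1 / (2 * (n : ℝ) + 1) ^ 2 := by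
    funext n; push_cast; ring_nf
  exact this ▸ basel_odd

private lemma hasSum_q (k : ℕ) :
    HasSum (fun n : ℕ => 1 / (2 * (n : ℝ) + 1 + 2 * (k : ℝ)) ^ 2)
      (Real.pi ^ 2 / 8 - ∑ i ∈ range k, 1 / (2 * (i : ℝ) + 1) ^ 2) := by
  have h2 := (hasSum_nat_add_iff (f := fun n : ℕ => 1 / (2 * (n : ℝ) + 1) ^ 2) k).mpr
    (by
      rw [show Real.pi ^ 2 / 8 - (∑ i ∈ range k, 1 / (2 * (i : ℝ) + 1) ^ 2)
          + ∑ i ∈ range k, 1 / (2 * (i : ℝ) + 1) ^ 2 = Real.pi ^ 2 / 8 from by ring]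
      exact basel_odd)
  have : (fun n : ℕ => 1 / (2 * ((n + k : ℕ) : ℝ) + 1) ^ 2)
      = fun n : ℕ => 1 / (2 * (n : ℝ) + 1 + 2 * (k : ℝ)) ^ 2 := by
    funext n; push_cast; ring_nf
  rwa [this] at h2

private lemma sums_eq (k : ℕ) :
    ∑ i ∈ range k, 1 / (2 * (i : ℝ) + 1 - 2 * (k : ℝ)) ^ 2
      = ∑ i ∈ range k, 1 / (2 * (i : ℝ) + 1) ^ 2 := by
  rw [← Finset.sum_range_reflect (fun j => 1 / (2 * (j : ℝ) + 1) ^ 2) k]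
  apply Finset.sum_congr rfl
  intro i hi
  have hik : i < k := Finset.mem_range.mp hi
  have hcast : ((k - 1 - i : ℕ) : ℝ) = (k : ℝ) - 1 - (i : ℝ) := by
    rw [Nat.sub_sub, Nat.cast_sub (by omega : 1 + i ≤ k)]
    push_cast; ring
  rw [hcast]
  rw [show 2 * ((k : ℝ) - 1 - (i : ℝ)) + 1 = -(2 * (i : ℝ) + 1 - 2 * (k : ℝ)) from by ring,
    neg_pow, Even.neg_one_pow (by norm_num)]
  ring

/-- for every even positive integer `l`,
`Σ_{x=1}^∞ (2x-1)² / ((2x-1-l)²(2x-1+l)²) = π²/16`. -/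
theorem sum_odd_sq_over_even_shifts (l : ℕ) (hl : Even l) (hl0 : 0 < l) :
    HasSum (fun n : ℕ =>
      ((2 * (n : ℝ) + 1) ^ 2) /
        (((2 * (n : ℝ) + 1 - (l : ℝ)) ^ 2) * ((2 * (n : ℝ) + 1 + (l : ℝ)) ^ 2)))
      (Real.pi ^ 2 / 16) := by
  obtain ⟨k, rfl⟩ := hl
  have hk : 1 ≤ k := by omega
  have hl_cast : ((k + k : ℕ) : ℝ) = 2 * (k : ℝ) := by push_cast; ring
  simp only [hl_cast]
  have hp := hasSum_p k
  have hq := hasSum_q k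
  have hh := hasSum_cross k hk
  have hcomb := ((hp.add hq).mul_left (1 / 4)).add hh
  have hval : (1 / 4) * ((Real.pi ^ 2 / 8 + ∑ i ∈ range k, 1 / (2 * (i : ℝ) + 1 - 2 * (k : ℝ)) ^ 2)
      + (Real.pi ^ 2 / 8 - ∑ i ∈ range k, 1 / (2 * (i : ℝ) + 1) ^ 2)) + 0
      = Real.pi ^ 2 / 16 := by
    rw [sums_eq k]; ring
  rw [hval] at hcomb
  have hfun : (fun n : ℕ =>
      ((2 * (n : ℝ) + 1) ^ 2) /
        (((2 * (n : ℝ) + 1 - 2 * (k : ℝ)) ^ 2) * ((2 * (n : ℝ) + 1 + 2 * (k : ℝ)) ^ 2)))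
      = fun n : ℕ => (1 / 4) * (1 / (2 * (n : ℝ) + 1 - 2 * (k : ℝ)) ^ 2
          + 1 / (2 * (n : ℝ) + 1 + 2 * (k : ℝ)) ^ 2)
        + (1 / 2) * (1 / ((2 * (n : ℝ) + 1 - 2 * (k : ℝ)) * (2 * (n : ℝ) + 1 + 2 * (k : ℝ)))) := by
    funext n
    have h1 := cast_odd_ne n k
    have h2 : (2 * (n : ℝ) + 1 + 2 * (k : ℝ)) ≠ 0 := by positivity
    field_simp
    ring
  rw [hfun]
  exact hcomb
end

section
/- For all odd positive integers l ≠ m, the series Σ_{x=1}^{∞} (2x)² / ((2x−l)(2x+l)(2x−m)(2x+m)) converges absolutely and equals 0. -/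
open Filter Finset Topology

lemma psum (k N : ℕ) (a : ℕ → ℝ) :
    ∑ n ∈ Finset.range N, (a (n+1) - a (n+1+k))
      = ∑ x ∈ Finset.range k, a (x+1) - ∑ x ∈ Finset.range k, a (N+x+1) := by
  induction N with
  | zero => simp
  | succ N ih =>
    have h1 : ∑ x ∈ Finset.range (k+1), a (N+x+1)
        = a (N+1) + ∑ x ∈ Finset.range k, a (N+x+2) := by
      rw [Finset.sum_range_succ', add_comm]
      congr 1
    have h2 : ∑ x ∈ Finset.range (k+1), a (N+x+1)
        = ∑ x ∈ Finset.range k, a (N+x+1) + a (N+k+1) := by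
      rw [Finset.sum_range_succ]
    have h3 : ∑ x ∈ Finset.range k, a (N+1+x+1)
        = ∑ x ∈ Finset.range k, a (N+x+2) := by
      apply Finset.sum_congr rfl; intro x _; congr 1; omega
    have h4 : a (N+1+k) = a (N+k+1) := by congr 1; omega
    rw [Finset.sum_range_succ, ih, h3]
    linarith [h1, h2]

lemma aux_fin (j : ℕ) :
    ∑ x ∈ Finset.range (2*j+1), (1:ℝ)/(2*((x:ℝ)+1) - (2*(j:ℝ)+1)) = 1/(2*(j:ℝ)+1) := by
  induction j with
  | zero => norm_num
  | succ j ih =>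
    have key : ∀ x : ℕ, (1:ℝ)/(2*((x:ℝ)+1) - (2*((j:ℝ)+1)+1)) = 1/(2*(x:ℝ) - (2*(j:ℝ)+1)) := by
      intro x; congr 1; ring
    have hne : (2:ℝ)*(j:ℝ)+1 ≠ 0 := by positivity
    have e1 : 2*(j+1)+1 = (2*j+2)+1 := by omega
    calc ∑ x ∈ Finset.range (2*(j+1)+1), (1:ℝ)/(2*((x:ℝ)+1) - (2*((j+1:ℕ):ℝ)+1))
        = ∑ x ∈ Finset.range ((2*j+2)+1), (1:ℝ)/(2*((x:ℝ)) - (2*(j:ℝ)+1)) := by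
          rw [e1]; apply Finset.sum_congr rfl; intro x _; push_cast; congr 1; ring
      _ = (∑ x ∈ Finset.range (2*j+2), (1:ℝ)/(2*(((x:ℝ))+1) - (2*(j:ℝ)+1))) + 1/(2*0 - (2*(j:ℝ)+1)) := by
          rw [Finset.sum_range_succ']; push_cast; ring_nf
          rw [add_comm ((-1 - (j:ℝ) * 2)⁻¹)]; congr 1; apply Finset.sum_congr rfl; intro x _; ring
      _ = (∑ x ∈ Finset.range (2*j+1), (1:ℝ)/(2*(((x:ℝ))+1) - (2*(j:ℝ)+1)))
            + 1/(2*(j:ℝ)+3) - 1/(2*(j:ℝ)+1) := by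
          rw [Finset.sum_range_succ]; push_cast
          have e2 : (2:ℝ)*((2*(j:ℝ)+1)+1) - (2*(j:ℝ)+1) = 2*(j:ℝ)+3 := by ring
          have e3 : (2:ℝ)*0 - (2*(j:ℝ)+1) = -(2*(j:ℝ)+1) := by ring
          rw [e2, e3, one_div_neg_eq_neg_one_div]
          ring
      _ = 1/(2*((j+1:ℕ):ℝ)+1) := by
          rw [ih]; push_cast; ring


lemma summable_aux : Summable (fun n : ℕ => 1/((n:ℝ)+1)^2) := by
  have h := Real.summable_one_div_nat_pow.2 (by norm_num : 1 < 2)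
  have h2 := (summable_nat_add_iff 1).2 h
  refine h2.congr fun n => ?_
  push_cast
  ring

lemma pf_id (u K : ℝ) (h1 : u - K ≠ 0) (h2 : u + K ≠ 0) :
    K^2/((u-K)*(u+K)) = (K/2)*(1/(u-K) - 1/(u+K)) := by
  field_simp
  ring

lemma tele (j : ℕ) :
    HasSum (fun n : ℕ => ((2*(j:ℝ)+1)^2) /
      ((2*((n:ℝ)+1) - (2*(j:ℝ)+1)) * (2*((n:ℝ)+1) + (2*(j:ℝ)+1)))) (1/2) := by
  set k : ℕ := 2*j+1 with hk
  have hK : ((k:ℝ)) = 2*(j:ℝ)+1 := by rw [hk]; push_cast; ring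
  set K : ℝ := 2*(j:ℝ)+1 with hKdef
  have hKpos : 0 < K := by positivity
  set f : ℕ → ℝ := fun n => K^2 / ((2*((n:ℝ)+1) - K) * (2*((n:ℝ)+1) + K)) with hf
  have hden1 : ∀ n : ℕ, (2*((n:ℝ)+1) - K) ≠ 0 := by
    intro n h
    have h' : ((2*(n+1):ℕ):ℝ) = ((k:ℕ):ℝ) := by push_cast [hK]; linarith
    have := Nat.cast_injective h'
    omega
  have hden2 : ∀ n : ℕ, (0:ℝ) < 2*((n:ℝ)+1) + K := by
    intro n; positivity
  -- Summability
  have hsum : Summable f := by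
    rw [← summable_nat_add_iff k]
    have hb : Summable (fun n : ℕ => K^2 * (1/((n:ℝ)+1)^2)) := summable_aux.mul_left _
    have hjn : ∀ n : ℕ, (0:ℝ) ≤ (n:ℝ) := fun n => Nat.cast_nonneg n
    have hj0 : (0:ℝ) ≤ (j:ℝ) := Nat.cast_nonneg j
    have key : ∀ n : ℕ, ((n:ℝ)+1) ≤ 2*(((n+k:ℕ):ℝ)+1) - K ∧ ((n:ℝ)+1) ≤ 2*(((n+k:ℕ):ℝ)+1) + K := by
      intro n
      constructor <;> (push_cast [hK]; linarith [hjn n])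
    refine Summable.of_nonneg_of_le (fun n => ?_) (fun n => ?_) hb
    · have h1 := (key n).1
      have hp : (0:ℝ) < (n:ℝ)+1 := by positivity
      exact div_nonneg (by positivity) (le_of_lt (mul_pos (lt_of_lt_of_le hp h1) (hden2 _)))
    · obtain ⟨h1, h2⟩ := key n
      have hp : (0:ℝ) < (n:ℝ)+1 := by positivity
      have hd : (0:ℝ) < (2*(((n+k:ℕ):ℝ)+1) - K) * (2*(((n+k:ℕ):ℝ)+1) + K) :=
        mul_pos (lt_of_lt_of_le hp h1) (hden2 _)
      show K^2 / ((2*(((n+k:ℕ):ℝ)+1) - K) * (2*(((n+k:ℕ):ℝ)+1) + K)) ≤ K^2 * (1/((n:ℝ)+1)^2)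
      rw [div_le_iff₀ hd]
      have hsq : ((n:ℝ)+1)^2 ≤ (2*(((n+k:ℕ):ℝ)+1) - K) * (2*(((n+k:ℕ):ℝ)+1) + K) := by
        nlinarith
      calc K^2 = K^2 * (1/((n:ℝ)+1)^2) * ((n:ℝ)+1)^2 := by field_simp
        _ ≤ K^2 * (1/((n:ℝ)+1)^2) * ((2*(((n+k:ℕ):ℝ)+1) - K) * (2*(((n+k:ℕ):ℝ)+1) + K)) := by
            apply mul_le_mul_of_nonneg_left hsq; positivity
  rw [Summable.hasSum_iff_tendsto_nat hsum]
  set a : ℕ → ℝ := fun x => 1/(2*(x:ℝ) - K) with ha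
  have hfa : ∀ n : ℕ, f n = (K/2) * (a (n+1) - a (n+1+k)) := by
    intro n
    have e1 : (2:ℝ)*((n+1+k:ℕ):ℝ) - K = 2*((n:ℝ)+1) + K := by push_cast [hK]; ring
    have e2 : (2:ℝ)*((n+1:ℕ):ℝ) - K = 2*((n:ℝ)+1) - K := by push_cast; ring
    show K^2 / ((2*((n:ℝ)+1) - K) * (2*((n:ℝ)+1) + K))
        = (K/2) * (1/(2*((n+1:ℕ):ℝ) - K) - 1/(2*((n+1+k:ℕ):ℝ) - K))
    rw [e1, e2]
    exact pf_id _ _ (hden1 n) (ne_of_gt (hden2 n))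
  have hC : ∑ x ∈ Finset.range k, a (x+1) = 1/K := by
    rw [hk, ← aux_fin j]
    apply Finset.sum_congr rfl
    intro x _
    show 1/(2*((x+1:ℕ):ℝ) - K) = _
    push_cast
    congr 1
  have hR : Tendsto (fun N => ∑ x ∈ Finset.range k, a (N+x+1)) atTop (nhds 0) := by
    have hx : ∀ x : ℕ, Tendsto (fun N : ℕ => a (N+x+1)) atTop (nhds 0) := by
      intro x
      have hlin : Tendsto (fun N : ℕ => 2*((N+x+1:ℕ):ℝ) - K) atTop atTop := by
        have h1 : Tendsto (fun N : ℕ => 2*(N:ℝ) + (2*((x:ℝ)+1) - K)) atTop atTop := by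
          apply Filter.tendsto_atTop_add_const_right
          exact Tendsto.const_mul_atTop (by norm_num : (0:ℝ) < 2) tendsto_natCast_atTop_atTop
        refine h1.congr fun N => ?_
        push_cast
        ring
      have := hlin.inv_tendsto_atTop
      refine this.congr fun N => ?_
      show (2*((N+x+1:ℕ):ℝ) - K)⁻¹ = a (N+x+1)
      rw [ha]
      push_cast
      rw [one_div]
    have h0 := tendsto_finset_sum (Finset.range k) (fun x _ => hx x)
    simpa using h0
  have hps : ∀ N, ∑ n ∈ Finset.range N, f n
      = (K/2) * (1/K - ∑ x ∈ Finset.range k, a (N+x+1)) := by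
    intro N
    rw [Finset.sum_congr rfl (fun n _ => hfa n), ← Finset.mul_sum, psum k N a, hC]
  simp only [hps]
  have hlim : Tendsto (fun N : ℕ => (K/2) * (1/K - ∑ x ∈ Finset.range k, a (N+x+1))) atTop
      (nhds ((K/2) * (1/K - 0))) :=
    Tendsto.const_mul _ (Tendsto.const_sub _ hR)
  convert hlim using 2
  field_simp
  ring

lemma odd_den_ne (k : ℕ) (hk : Odd k) (n : ℕ) : (2*((n:ℝ)+1) - (k:ℝ)) ≠ 0 := by
  intro h
  have h' : ((2*(n+1):ℕ):ℝ) = ((k:ℕ):ℝ) := by push_cast; linarith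
  have := Nat.cast_injective h'
  obtain ⟨j, hj⟩ := hk
  omega

/-- for distinct odd positive integers `l ≠ m`, the series
`Σ_{x=1}^∞ (2x)² / ((2x-l)(2x+l)(2x-m)(2x+m))` converges absolutely and equals `0`. -/
theorem sum_even_sq_mixed_odd (l m : ℕ) (hl : Odd l) (hm : Odd m)
    (hl0 : 0 < l) (hm0 : 0 < m) (hlm : l ≠ m) :
    Summable (fun n : ℕ =>
      |((2 * ((n : ℝ) + 1)) ^ 2) /
        ((2 * ((n : ℝ) + 1) - (l : ℝ)) * (2 * ((n : ℝ) + 1) + (l : ℝ)) *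
         (2 * ((n : ℝ) + 1) - (m : ℝ)) * (2 * ((n : ℝ) + 1) + (m : ℝ)))|) ∧
    HasSum (fun n : ℕ =>
      ((2 * ((n : ℝ) + 1)) ^ 2) /
        ((2 * ((n : ℝ) + 1) - (l : ℝ)) * (2 * ((n : ℝ) + 1) + (l : ℝ)) *
         (2 * ((n : ℝ) + 1) - (m : ℝ)) * (2 * ((n : ℝ) + 1) + (m : ℝ))))
      0 := by
  obtain ⟨jl, hjl⟩ := hl
  obtain ⟨jm, hjm⟩ := hm
  have hlR : (l:ℝ) = 2*(jl:ℝ)+1 := by rw [hjl]; push_cast; ring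
  have hmR : (m:ℝ) = 2*(jm:ℝ)+1 := by rw [hjm]; push_cast; ring
  have htl : HasSum (fun n : ℕ => ((l:ℝ)^2) /
      ((2*((n:ℝ)+1) - (l:ℝ)) * (2*((n:ℝ)+1) + (l:ℝ)))) (1/2) := by
    rw [hlR]; exact tele jl
  have htm : HasSum (fun n : ℕ => ((m:ℝ)^2) /
      ((2*((n:ℝ)+1) - (m:ℝ)) * (2*((n:ℝ)+1) + (m:ℝ)))) (1/2) := by
    rw [hmR]; exact tele jm
  set c : ℝ := 1/((l:ℝ)^2 - (m:ℝ)^2) with hc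
  have hlm' : (l:ℝ) ≠ (m:ℝ) := by
    intro h; exact hlm (Nat.cast_injective h)
  have hne : (l:ℝ)^2 - (m:ℝ)^2 ≠ 0 := by
    have h2 : (0:ℝ) < (l:ℝ)+(m:ℝ) := by
      have : (0:ℝ) < (l:ℝ) := by exact_mod_cast hl0
      have : (0:ℝ) < (m:ℝ) := by exact_mod_cast hm0
      linarith
    have : (l:ℝ)^2 - (m:ℝ)^2 = ((l:ℝ)-(m:ℝ))*((l:ℝ)+(m:ℝ)) := by ring
    rw [this]
    exact mul_ne_zero (sub_ne_zero.2 hlm') (ne_of_gt h2)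
  have hmain : HasSum (fun n : ℕ =>
      c * (((l:ℝ)^2) / ((2*((n:ℝ)+1) - (l:ℝ)) * (2*((n:ℝ)+1) + (l:ℝ)))
         - ((m:ℝ)^2) / ((2*((n:ℝ)+1) - (m:ℝ)) * (2*((n:ℝ)+1) + (m:ℝ))))) 0 := by
    have := (htl.sub htm).mul_left c
    simpa using this
  have hpt : ∀ n : ℕ,
      ((2 * ((n : ℝ) + 1)) ^ 2) /
        ((2 * ((n : ℝ) + 1) - (l : ℝ)) * (2 * ((n : ℝ) + 1) + (l : ℝ)) *
         (2 * ((n : ℝ) + 1) - (m : ℝ)) * (2 * ((n : ℝ) + 1) + (m : ℝ)))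
      = c * (((l:ℝ)^2) / ((2*((n:ℝ)+1) - (l:ℝ)) * (2*((n:ℝ)+1) + (l:ℝ)))
         - ((m:ℝ)^2) / ((2*((n:ℝ)+1) - (m:ℝ)) * (2*((n:ℝ)+1) + (m:ℝ)))) := by
    intro n
    have d1 := odd_den_ne l ⟨jl, hjl⟩ n
    have d2 : (2*((n:ℝ)+1) + (l:ℝ)) ≠ 0 := by positivity
    have d3 := odd_den_ne m ⟨jm, hjm⟩ n
    have d4 : (2*((n:ℝ)+1) + (m:ℝ)) ≠ 0 := by positivity
    rw [hc]
    field_simp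
    ring
  have hsum2 : HasSum (fun n : ℕ =>
      ((2 * ((n : ℝ) + 1)) ^ 2) /
        ((2 * ((n : ℝ) + 1) - (l : ℝ)) * (2 * ((n : ℝ) + 1) + (l : ℝ)) *
         (2 * ((n : ℝ) + 1) - (m : ℝ)) * (2 * ((n : ℝ) + 1) + (m : ℝ)))) 0 := by
    rw [funext hpt]
    exact hmain
  exact ⟨summable_abs_iff.2 hsum2.summable, hsum2⟩
end

section
/- For all even nonnegative integers l ≠ m, the series Σ_{x=1}^{∞} (2x−1)² / ((2x−1−l)(2x−1+l)(2x−1−m)(2x−1+m)) converges absolutely and equals 0. -/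
open Finset Filter Topology

/-- `gg k n = 1/((2n+1-2k)(2n+1+2k))`. -/
noncomputable def gg (k n : ℕ) : ℝ := 1 / ((2*(n:ℝ)+1 - 2*k) * (2*(n:ℝ)+1 + 2*k))

lemma odd_sub_ne (n k : ℕ) : 2*(n:ℝ)+1 - 2*(k:ℝ) ≠ 0 := by
  intro h
  have h2 : ((2*n+1 : ℕ) : ℝ) = ((2*k : ℕ) : ℝ) := by push_cast; linarith
  have := Nat.cast_injective h2
  omega

lemma summable_gg (k : ℕ) : Summable (gg k) := by
  rw [← summable_nat_add_iff k]
  have base : Summable (fun n : ℕ => 1 / ((n:ℝ)+1)^2) := by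
    have h := Real.summable_one_div_nat_pow.2 (show 1 < 2 by norm_num)
    have := (summable_nat_add_iff 1).2 h
    apply this.congr
    intro n; push_cast; ring
  apply Summable.of_nonneg_of_le _ _ base
  · intro n
    unfold gg
    have h1 : 2*((n+k : ℕ):ℝ)+1 - 2*k = 2*(n:ℝ)+1 := by push_cast; ring
    rw [h1]
    positivity
  · intro n
    unfold gg
    have h1 : 2*((n+k : ℕ):ℝ)+1 - 2*k = 2*(n:ℝ)+1 := by push_cast; ring
    rw [h1]
    have h2 : ((n:ℝ)+1)^2 ≤ (2*(n:ℝ)+1) * (2*((n+k:ℕ):ℝ)+1 + 2*k) := by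
      push_cast; nlinarith [Nat.cast_nonneg (α := ℝ) n, Nat.cast_nonneg (α := ℝ) k]
    exact one_div_le_one_div_of_le (by positivity) h2

lemma base_sum (k : ℕ) : ∑ j ∈ range (2*k), 1/(2*(j:ℝ)+1-2*k) = 0 := by
  have h := Finset.sum_range_reflect (fun j => 1/(2*(j:ℝ)+1-2*k)) (2*k)
  have h2 : ∑ j ∈ range (2*k), 1/(2*((2*k-1-j : ℕ):ℝ)+1-2*k)
      = ∑ j ∈ range (2*k), -(1/(2*(j:ℝ)+1-2*k)) := by
    apply Finset.sum_congr rfl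
    intro j hj
    rw [Finset.mem_range] at hj
    have hc : ((2*k-1-j : ℕ):ℝ) = 2*(k:ℝ)-1-j := by
      rw [Nat.cast_sub (by omega : j ≤ 2*k-1), Nat.cast_sub (by omega : 1 ≤ 2*k)]
      push_cast; ring
    rw [hc, show 2*(2*(k:ℝ)-1-(j:ℝ))+1-2*(k:ℝ) = -(2*(j:ℝ)+1-2*(k:ℝ)) from by ring,
      div_neg]
  simp only [h2, Finset.sum_neg_distrib] at h
  linarith

lemma partial_sum_gg (k : ℕ) (hk : 0 < k) (N : ℕ) :
    ∑ n ∈ range N, gg k n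
      = -(1/(4*(k:ℝ))) * ∑ j ∈ range (2*k), 1/(2*(N:ℝ)+2*(j:ℝ)+1-2*(k:ℝ)) := by
  induction N with
  | zero =>
    simp only [Finset.range_zero, Finset.sum_empty, Nat.cast_zero]
    have : ∑ j ∈ range (2*k), 1/(2*(0:ℝ)+2*(j:ℝ)+1-2*(k:ℝ))
        = ∑ j ∈ range (2*k), 1/(2*(j:ℝ)+1-2*k) := by
      apply Finset.sum_congr rfl; intro j hj; ring_nf
    rw [this, base_sum]
    ring
  | succ N ih =>
    rw [Finset.sum_range_succ, ih]
    have tel := Finset.sum_range_sub (fun j => 1/(2*(N:ℝ)+2*(j:ℝ)+1-2*(k:ℝ))) (2*k)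
    have hshift : ∑ j ∈ range (2*k), 1/(2*((N+1:ℕ):ℝ)+2*(j:ℝ)+1-2*(k:ℝ))
        = ∑ j ∈ range (2*k), 1/(2*(N:ℝ)+2*((j+1:ℕ):ℝ)+1-2*(k:ℝ)) := by
      apply Finset.sum_congr rfl; intro j hj; push_cast; ring_nf
    rw [hshift]
    have hsub : ∑ j ∈ range (2*k), 1/(2*(N:ℝ)+2*((j+1:ℕ):ℝ)+1-2*(k:ℝ))
        = ∑ j ∈ range (2*k), 1/(2*(N:ℝ)+2*(j:ℝ)+1-2*(k:ℝ))
          + (1/(2*(N:ℝ)+2*((2*k:ℕ):ℝ)+1-2*(k:ℝ)) - 1/(2*(N:ℝ)+2*((0:ℕ):ℝ)+1-2*(k:ℝ))) := by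
      rw [← tel, ← Finset.sum_add_distrib]
      apply Finset.sum_congr rfl; intro j hj; push_cast; ring
    have h1 := odd_sub_ne N k
    have h2 : 2*(N:ℝ)+1+2*(k:ℝ) ≠ 0 := by positivity
    have hk' : (k:ℝ) ≠ 0 := Nat.cast_ne_zero.2 hk.ne'
    have hstep : gg k N = -(1/(4*(k:ℝ))) *
        (1/(2*(N:ℝ)+2*((2*k:ℕ):ℝ)+1-2*(k:ℝ)) - 1/(2*(N:ℝ)+2*((0:ℕ):ℝ)+1-2*(k:ℝ))) := by
      unfold gg
      rw [show 2*(N:ℝ)+2*((0:ℕ):ℝ)+1-2*(k:ℝ) = 2*(N:ℝ)+1-2*(k:ℝ) from by push_cast; ring,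
        show 2*(N:ℝ)+2*((2*k:ℕ):ℝ)+1-2*(k:ℝ) = 2*(N:ℝ)+1+2*(k:ℝ) from by push_cast; ring]
      field_simp
      ring
    rw [hsub, mul_add, hstep]

lemma hasSum_gg (k : ℕ) (hk : 0 < k) : HasSum (gg k) 0 := by
  rw [(summable_gg k).hasSum_iff_tendsto_nat]
  simp_rw [partial_sum_gg k hk]
  have hlim : Tendsto (fun N : ℕ =>
      -(1/(4*(k:ℝ))) * ∑ j ∈ range (2*k), 1/(2*(N:ℝ)+2*(j:ℝ)+1-2*(k:ℝ)))
      atTop (𝓝 (-(1/(4*(k:ℝ))) * ∑ j ∈ range (2*k), (0:ℝ))) := by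
    apply Tendsto.const_mul
    apply tendsto_finset_sum
    intro j _
    have haff : Tendsto (fun N : ℕ => 2*(N:ℝ)+2*(j:ℝ)+1-2*(k:ℝ)) atTop atTop := by
      have h1 : Tendsto (fun N : ℕ => 2*(N:ℝ)) atTop atTop :=
        (tendsto_natCast_atTop_atTop (R := ℝ)).const_mul_atTop two_pos
      have h2 := tendsto_atTop_add_const_right atTop (2*(j:ℝ)+1-2*(k:ℝ)) h1
      apply h2.congr
      intro N; ring
    simpa [one_div, Pi.inv_def] using haff.inv_tendsto_atTop
  simpa using hlim

/-- for distinct even nonnegative integers `l ≠ m`, the series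
`Σ_{x=1}^∞ (2x-1)² / ((2x-1-l)(2x-1+l)(2x-1-m)(2x-1+m))` converges absolutely
and equals `0`. -/
theorem sum_odd_sq_mixed_even (l m : ℕ) (hl : Even l) (hm : Even m) (hlm : l ≠ m) :
    Summable (fun n : ℕ =>
      |((2 * (n : ℝ) + 1) ^ 2) /
        ((2 * (n : ℝ) + 1 - (l : ℝ)) * (2 * (n : ℝ) + 1 + (l : ℝ)) *
         (2 * (n : ℝ) + 1 - (m : ℝ)) * (2 * (n : ℝ) + 1 + (m : ℝ)))|) ∧
    HasSum (fun n : ℕ =>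
      ((2 * (n : ℝ) + 1) ^ 2) /
        ((2 * (n : ℝ) + 1 - (l : ℝ)) * (2 * (n : ℝ) + 1 + (l : ℝ)) *
         (2 * (n : ℝ) + 1 - (m : ℝ)) * (2 * (n : ℝ) + 1 + (m : ℝ))))
      0 := by
  obtain ⟨a, rfl⟩ := hl
  obtain ⟨b, rfl⟩ := hm
  have hab : a ≠ b := by omega
  have hcl : ((a+a : ℕ):ℝ) = 2*(a:ℝ) := by push_cast; ring
  have hcm : ((b+b : ℕ):ℝ) = 2*(b:ℝ) := by push_cast; ring
  have hd : (2*(a:ℝ))^2 - (2*(b:ℝ))^2 ≠ 0 := by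
    intro h
    have h2 : ((2*a)^2 : ℕ) = ((2*b)^2 : ℕ) := by
      have : ((2*a : ℕ):ℝ)^2 = ((2*b : ℕ):ℝ)^2 := by push_cast; linarith
      exact_mod_cast this
    have := Nat.pow_left_injective (by norm_num) h2
    omega
  have hd' : (2*(b:ℝ))^2 - (2*(a:ℝ))^2 ≠ 0 := by intro h; apply hd; linarith
  have hpt : ∀ n : ℕ,
      ((2 * (n : ℝ) + 1) ^ 2) /
        ((2 * (n : ℝ) + 1 - ((a+a : ℕ) : ℝ)) * (2 * (n : ℝ) + 1 + ((a+a : ℕ) : ℝ)) *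
         (2 * (n : ℝ) + 1 - ((b+b : ℕ) : ℝ)) * (2 * (n : ℝ) + 1 + ((b+b : ℕ) : ℝ)))
      = ((2*(a:ℝ))^2 / ((2*(a:ℝ))^2 - (2*(b:ℝ))^2)) * gg a n
        + ((2*(b:ℝ))^2 / ((2*(b:ℝ))^2 - (2*(a:ℝ))^2)) * gg b n := by
    intro n
    rw [hcl, hcm]
    unfold gg
    have e1 := odd_sub_ne n a
    have e2 := odd_sub_ne n b
    have e3 : 2*(n:ℝ)+1+2*(a:ℝ) ≠ 0 := by positivity
    have e4 : 2*(n:ℝ)+1+2*(b:ℝ) ≠ 0 := by positivity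
    have e5 : (a:ℝ)^2 - (b:ℝ)^2 ≠ 0 := by intro h; apply hd; linarith
    have e6 : (b:ℝ)^2 - (a:ℝ)^2 ≠ 0 := by intro h; apply hd; linarith
    field_simp
    ring
  have hs1 : HasSum (fun n : ℕ => ((2*(a:ℝ))^2 / ((2*(a:ℝ))^2 - (2*(b:ℝ))^2)) * gg a n) 0 := by
    rcases Nat.eq_zero_or_pos a with h | h
    · simp [h]
    · simpa using (hasSum_gg a h).mul_left _
  have hs2 : HasSum (fun n : ℕ => ((2*(b:ℝ))^2 / ((2*(b:ℝ))^2 - (2*(a:ℝ))^2)) * gg b n) 0 := by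
    rcases Nat.eq_zero_or_pos b with h | h
    · simp [h]
    · simpa using (hasSum_gg b h).mul_left _
  have H : HasSum (fun n : ℕ =>
      ((2 * (n : ℝ) + 1) ^ 2) /
        ((2 * (n : ℝ) + 1 - ((a+a : ℕ) : ℝ)) * (2 * (n : ℝ) + 1 + ((a+a : ℕ) : ℝ)) *
         (2 * (n : ℝ) + 1 - ((b+b : ℕ) : ℝ)) * (2 * (n : ℝ) + 1 + ((b+b : ℕ) : ℝ)))) 0 := by
    have := hs1.add hs2
    rw [add_zero] at this
    exact (funext hpt ▸ this)
  exact ⟨summable_abs_iff.2 H.summable, H⟩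
end

section
/- Let 0 < γ < 1, h > 0, and C > 0, and let 𝒦 : ℝ × ℝ → ℝ be any function satisfying |𝒦(x,t)| ≤ C γ^{|x−t|/h} for all x, t ∈ ℝ. Then for all x, t ∈ [0,1] the series Σ_{l ∈ ℤ} 𝒦(x, t+l) converges absolutely and satisfies |Σ_{l ∈ ℤ} 𝒦(x, t+l)| ≤ C [ γ^{|x−t|/h} + γ^{1/h} (γ^{(x−t)/h} + γ^{(t−x)/h}) / (1 − γ^{1/h}) ]. -/
/-- periodization of an exponentially decaying kernel. If
`|𝒦(x,t)| ≤ C γ^{|x-t|/h}` for all `x, t`, then for `x, t ∈ [0,1]` the series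
`Σ_{l ∈ ℤ} 𝒦(x, t+l)` converges absolutely and is bounded by
`C (γ^{|x-t|/h} + γ^{1/h}(γ^{(x-t)/h} + γ^{(t-x)/h})/(1-γ^{1/h}))`. -/
theorem periodized_kernel_bound (γ h C : ℝ) (hγ0 : 0 < γ) (hγ1 : γ < 1)
    (hh : 0 < h) (hC : 0 < C) (K : ℝ → ℝ → ℝ)
    (hK : ∀ x t : ℝ, |K x t| ≤ C * γ ^ (|x - t| / h))
    (x t : ℝ) (hx : x ∈ Set.Icc (0 : ℝ) 1) (ht : t ∈ Set.Icc (0 : ℝ) 1) :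
    Summable (fun l : ℤ => |K x (t + (l : ℝ))|) ∧
    |∑' l : ℤ, K x (t + (l : ℝ))| ≤
      C * (γ ^ (|x - t| / h) +
        γ ^ (1 / h) * (γ ^ ((x - t) / h) + γ ^ ((t - x) / h)) / (1 - γ ^ (1 / h))) := by
  obtain ⟨hx0, hx1⟩ := hx
  obtain ⟨ht0, ht1⟩ := ht
  set r : ℝ := γ ^ (1 / h) with hr
  have hr0 : 0 < r := Real.rpow_pos_of_pos hγ0 _
  have hr1 : r < 1 := Real.rpow_lt_one hγ0.le hγ1 (by positivity)
  have hr1' : (0:ℝ) < 1 - r := by linarith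
  -- key rpow identity
  have key : ∀ (a : ℝ) (n : ℕ), γ ^ ((a + n) / h) = γ ^ (a / h) * r ^ n := by
    intro a n
    rw [add_div, Real.rpow_add hγ0]
    congr 1
    rw [hr, ← Real.rpow_natCast (γ ^ (1/h)) n, ← Real.rpow_mul hγ0.le]
    congr 1
    ring
  set g : ℤ → ℝ := fun l => C * γ ^ (|x - t - (l : ℝ)| / h) with hg
  -- positive tail
  have hpos : HasSum (fun n : ℕ => g ((n : ℤ) + 1))
      (C * γ ^ ((t - x) / h) * r * (1 - r)⁻¹) := by
    have geom : HasSum (fun n : ℕ => (C * γ ^ ((t - x) / h) * r) * r ^ n)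
        ((C * γ ^ ((t - x) / h) * r) * (1 - r)⁻¹) :=
      (hasSum_geometric_of_lt_one hr0.le hr1).mul_left _
    convert geom using 2 with n
    have habs : |x - t - (((n : ℤ) + 1 : ℤ) : ℝ)| = (t - x + 1) + n := by
      push_cast
      rw [abs_of_nonpos (by linarith [Nat.cast_nonneg (α := ℝ) n])]
      ring
    simp only [hg]
    rw [habs, key (t - x + 1) n, add_div, Real.rpow_add hγ0, ← hr]
    ring
  -- negative tail
  have hneg : HasSum (fun n : ℕ => g (-((n : ℤ) + 1)))
      (C * γ ^ ((x - t) / h) * r * (1 - r)⁻¹) := by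
    have geom : HasSum (fun n : ℕ => (C * γ ^ ((x - t) / h) * r) * r ^ n)
        ((C * γ ^ ((x - t) / h) * r) * (1 - r)⁻¹) :=
      (hasSum_geometric_of_lt_one hr0.le hr1).mul_left _
    convert geom using 2 with n
    have habs : |x - t - ((-((n : ℤ) + 1) : ℤ) : ℝ)| = (x - t + 1) + n := by
      push_cast
      rw [abs_of_nonneg (by linarith [Nat.cast_nonneg (α := ℝ) n])]
      ring
    simp only [hg]
    rw [habs, key (x - t + 1) n, add_div, Real.rpow_add hγ0, ← hr]
    ring
  -- full nat part
  have hpos' : HasSum (fun n : ℕ => g ((n + 1 : ℕ) : ℤ))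
      (C * γ ^ ((t - x) / h) * r * (1 - r)⁻¹) := by
    convert hpos using 2 with n
    simp
  have hnat : HasSum (fun n : ℕ => g (n : ℤ))
      (C * γ ^ ((t - x) / h) * r * (1 - r)⁻¹ + C * γ ^ (|x - t| / h)) := by
    have := (hasSum_nat_add_iff (f := fun n : ℕ => g (n : ℤ)) 1).mp hpos'
    simpa [hg] using this
  have hG : HasSum g
      ((C * γ ^ ((t - x) / h) * r * (1 - r)⁻¹ + C * γ ^ (|x - t| / h)) +
        C * γ ^ ((x - t) / h) * r * (1 - r)⁻¹) :=
    HasSum.of_nat_of_neg_add_one hnat hneg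
  have hGval : (C * γ ^ ((t - x) / h) * r * (1 - r)⁻¹ + C * γ ^ (|x - t| / h)) +
        C * γ ^ ((x - t) / h) * r * (1 - r)⁻¹ =
      C * (γ ^ (|x - t| / h) +
        r * (γ ^ ((x - t) / h) + γ ^ ((t - x) / h)) / (1 - r)) := by
    field_simp
    ring
  rw [hGval] at hG
  -- comparison
  have hbound : ∀ l : ℤ, |K x (t + (l : ℝ))| ≤ g l := by
    intro l
    have := hK x (t + (l : ℝ))
    simpa [hg, show x - (t + (l:ℝ)) = x - t - (l:ℝ) by ring] using this
  have hgnonneg : ∀ l : ℤ, 0 ≤ |K x (t + (l : ℝ))| := fun l => abs_nonneg _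
  have hsum : Summable (fun l : ℤ => |K x (t + (l : ℝ))|) :=
    Summable.of_nonneg_of_le hgnonneg hbound hG.summable
  refine ⟨hsum, ?_⟩
  have h1 : |∑' l : ℤ, K x (t + (l : ℝ))| ≤ ∑' l : ℤ, |K x (t + (l : ℝ))| := by
    have := norm_tsum_le_tsum_norm (f := fun l : ℤ => K x (t + (l : ℝ)))
      (by simpa [Real.norm_eq_abs] using hsum)
    simpa [Real.norm_eq_abs] using this
  have h2 : ∑' l : ℤ, |K x (t + (l : ℝ))| ≤ ∑' l : ℤ, g l :=
    Summable.tsum_le_tsum hbound hsum hG.summable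
  exact h1.trans (h2.trans_eq hG.tsum_eq)
end

section
/- Let 0 < γ < 1 and for h > 0 define γ_h(x,t) = γ^{|x−t|/h} + γ^{1/h} (γ^{(x−t)/h} + γ^{(t−x)/h}) / (1 − γ^{1/h}). There exists a constant C > 0 depending only on γ such that for every h ∈ (0,1], every integer N ≥ 2 with N h ≥ 1, and every x ∈ [0,1], with t_i = (i−1)/(N−1) for i = 1,…,N: (1/(N h)) Σ_{i=1}^{N} γ_h(x, t_i) ≤ C and (1/(N h)) Σ_{i=1}^{N} γ_h(x, t_i)² ≤ C. -/
open Finset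


noncomputable section


/-- geometric sum bound for rpow with arithmetic exponents -/
lemma geom_aux (γ : ℝ) (hγ0 : 0 < γ) (hγ1 : γ < 1) (c s : ℝ) (hc : 0 ≤ c) (hs : 0 < s) (n : ℕ) :
    ∑ i ∈ Finset.range n, γ ^ (c + (i : ℝ) * s) ≤ 1 / (1 - γ ^ s) := by
  have hr : γ ^ s < 1 := Real.rpow_lt_one hγ0.le hγ1 hs
  have hr0 : (0:ℝ) ≤ γ ^ s := Real.rpow_nonneg hγ0.le s
  have h1 : ∀ i : ℕ, γ ^ (c + (i : ℝ) * s) = γ ^ c * (γ ^ s) ^ i := by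
    intro i
    rw [Real.rpow_add hγ0, ← Real.rpow_natCast (γ ^ s) i, ← Real.rpow_mul hγ0.le, mul_comm s (i:ℝ)]
  simp only [h1]
  rw [← Finset.mul_sum]
  have hgs : ∑ i ∈ Finset.range n, (γ ^ s) ^ i ≤ 1 / (1 - γ ^ s) := by
    rw [geom_sum_eq hr.ne n, show ((γ^s)^n - 1)/(γ^s - 1) = (1-(γ^s)^n)/(1-γ^s) by
      rw [← neg_div_neg_eq]; ring_nf]
    have h2 : (0:ℝ) ≤ (γ^s)^n := pow_nonneg hr0 n
    gcongr
    · linarith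
  calc γ ^ c * ∑ i ∈ Finset.range n, (γ ^ s) ^ i
      ≤ 1 * (1 / (1 - γ ^ s)) := by
        apply mul_le_mul (Real.rpow_le_one hγ0.le hγ1.le hc) hgs
          (Finset.sum_nonneg fun i _ => pow_nonneg hr0 i) zero_le_one
    _ = 1 / (1 - γ ^ s) := one_mul _

/-- descending variant -/
lemma geom_aux' (γ : ℝ) (hγ0 : 0 < γ) (hγ1 : γ < 1) (c s : ℝ) (hc : 0 ≤ c) (hs : 0 < s) (n : ℕ) :
    ∑ i ∈ Finset.range n, γ ^ (c + ((n:ℝ) - 1 - (i:ℝ)) * s) ≤ 1 / (1 - γ ^ s) := by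
  have := Finset.sum_range_reflect (fun i => γ ^ (c + (i:ℝ) * s)) n
  have key : ∑ i ∈ Finset.range n, γ ^ (c + ((n:ℝ) - 1 - (i:ℝ)) * s)
      = ∑ i ∈ Finset.range n, γ ^ (c + (i:ℝ) * s) := by
    rw [← this]
    apply Finset.sum_congr rfl
    intro i hi
    have hi' := Finset.mem_range.1 hi
    congr 2
    have h1 : ((n - 1 - i : ℕ) : ℝ) = (n:ℝ) - 1 - (i:ℝ) := by
      have : n - 1 - i = n - (i+1) := by omega
      rw [this, Nat.cast_sub (by omega)]
      push_cast; ring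
    rw [h1]
  rw [key]
  exact geom_aux γ hγ0 hγ1 c s hc hs n



/-- The majorant kernel
`γ_h(x,t) = γ^{|x-t|/h} + γ^{1/h}(γ^{(x-t)/h} + γ^{(t-x)/h})/(1-γ^{1/h})`. -/
def gammaKer (γ h x t : ℝ) : ℝ :=
  γ ^ (|x - t| / h) +
    γ ^ (1 / h) * (γ ^ ((x - t) / h) + γ ^ ((t - x) / h)) / (1 - γ ^ (1 / h))

set_option maxHeartbeats 1000000 in
/-- Riemann-sum bounds for the majorant kernel: there is a
constant `C` depending only on `γ` such that for all `h ∈ (0,1]`, `N ≥ 2` with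
`N h ≥ 1`, and `x ∈ [0,1]`, with design points `t_i = (i-1)/(N-1)`,
`(1/(Nh)) Σ_i γ_h(x,t_i) ≤ C` and `(1/(Nh)) Σ_i γ_h(x,t_i)² ≤ C`. -/
theorem gammaKer_riemann_sum_bound (γ : ℝ) (hγ0 : 0 < γ) (hγ1 : γ < 1) :
    ∃ C > 0, ∀ h : ℝ, 0 < h → h ≤ 1 → ∀ N : ℕ, 2 ≤ N → 1 ≤ (N : ℝ) * h →
      ∀ x ∈ Set.Icc (0 : ℝ) 1,
        (1 / ((N : ℝ) * h)) *
            ∑ i ∈ Finset.range N, gammaKer γ h x ((i : ℝ) / ((N : ℝ) - 1)) ≤ C ∧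
        (1 / ((N : ℝ) * h)) *
            ∑ i ∈ Finset.range N, (gammaKer γ h x ((i : ℝ) / ((N : ℝ) - 1))) ^ 2 ≤ C := by
  set ε : ℝ := 1 - γ with hεdef
  set M : ℝ := 1 + 2 / ε with hMdef
  set C1 : ℝ := (2 + 2 / ε) / ε with hC1def
  clear_value C1 M ε
  have hε : 0 < ε := by rw [hεdef]; linarith
  have hM : 0 < M := by
    have h2ε : 0 < 2/ε := div_pos two_pos hε
    rw [hMdef]; linarith
  have hC1 : 0 < C1 := by
    have h2ε : 0 < 2/ε := div_pos two_pos hε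
    rw [hC1def]; exact div_pos (by linarith) hε
  refine ⟨(1 + M) * C1, mul_pos (by linarith) hC1, ?_⟩
  intro h hh0 hh1 N hN2 hNh x hx
  obtain ⟨hx0, hx1⟩ := hx
  have hN2' : (2:ℝ) ≤ (N:ℝ) := by exact_mod_cast hN2
  have hNne : (N:ℝ) - 1 ≠ 0 := by linarith
  set n1 : ℝ := (N:ℝ) - 1 with hn1def
  set s : ℝ := 1 / (n1 * h) with hsdef
  clear_value s n1
  have hn1 : 0 < n1 := by rw [hn1def]; linarith
  have hn1' : (1:ℝ) ≤ n1 := by rw [hn1def]; linarith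
  have hs : 0 < s := by rw [hsdef]; positivity
  have hNh0 : (0:ℝ) < (N:ℝ) * h := lt_of_lt_of_le one_pos hNh
  have hrs1 : γ ^ s < 1 := Real.rpow_lt_one hγ0.le hγ1 hs
  have hds : 0 < 1 - γ ^ s := by linarith
  -- the boundary geometric factor
  have hq1 : γ ^ (1/h) ≤ γ := by
    have h1h : (1:ℝ) ≤ 1/h := by
      rw [le_div_iff₀ hh0]; linarith
    have := Real.rpow_le_rpow_of_exponent_ge hγ0 hγ1.le h1h
    rwa [Real.rpow_one] at this
  have hq1pos : 0 < 1 - γ ^ (1/h) := by linarith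
  have hq1ε : ε ≤ 1 - γ ^ (1/h) := by rw [hεdef]; linarith
  -- kernel decomposition
  have hker : ∀ i : ℕ, gammaKer γ h x ((i:ℝ) / n1)
      = γ ^ (|x - (i:ℝ)/n1| / h)
        + (γ ^ ((1 + x - (i:ℝ)/n1) / h) + γ ^ ((1 + (i:ℝ)/n1 - x) / h)) / (1 - γ ^ (1/h)) := by
    intro i
    simp only [gammaKer]
    have e1 : 1/h + (x - (i:ℝ)/n1)/h = (1 + x - (i:ℝ)/n1)/h := by ring
    have e2 : 1/h + ((i:ℝ)/n1 - x)/h = (1 + (i:ℝ)/n1 - x)/h := by ring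
    rw [mul_add, ← Real.rpow_add hγ0, ← Real.rpow_add hγ0, e1, e2]
  -- bound the C-sum (ascending)
  have hSC : ∑ i ∈ Finset.range N, γ ^ ((1 + (i:ℝ)/n1 - x) / h) ≤ 1 / (1 - γ ^ s) := by
    have he : ∀ i ∈ Finset.range N, γ ^ ((1 + (i:ℝ)/n1 - x) / h)
        = γ ^ ((1 - x)/h + (i:ℝ) * s) := by
      intro i _
      congr 1
      rw [hsdef]
      field_simp [hn1.ne', hh0.ne']
      try ring
    rw [Finset.sum_congr rfl he]
    exact geom_aux γ hγ0 hγ1 _ s (div_nonneg (by linarith) hh0.le) hs N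
  -- bound the B-sum (descending)
  have hSB : ∑ i ∈ Finset.range N, γ ^ ((1 + x - (i:ℝ)/n1) / h) ≤ 1 / (1 - γ ^ s) := by
    have he : ∀ i ∈ Finset.range N, γ ^ ((1 + x - (i:ℝ)/n1) / h)
        = γ ^ (x/h + (n1 - (i:ℝ)) * s) := by
      intro i _
      congr 1
      rw [hsdef]
      field_simp [hn1.ne', hh0.ne']
      try ring
    rw [Finset.sum_congr rfl he, hn1def]
    exact geom_aux' γ hγ0 hγ1 _ s (div_nonneg hx0 hh0.le) hs N
  -- bound the A-sum
  have hSA : ∑ i ∈ Finset.range N, γ ^ (|x - (i:ℝ)/n1| / h) ≤ 2 / (1 - γ ^ s) := by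
    set m : ℕ := ⌊n1 * x⌋₊ with hmdef
    clear_value m
    have hmle : (m:ℝ) ≤ n1 * x := by rw [hmdef]; exact Nat.floor_le (by positivity)
    have hmlt : n1 * x < (m:ℝ) + 1 := by rw [hmdef]; exact Nat.lt_floor_add_one _
    have hmN : m + 1 ≤ N := by
      by_contra hcon
      push_neg at hcon
      have hNm : (N:ℝ) ≤ (m:ℝ) := by exact_mod_cast Nat.lt_succ_iff.mp hcon
      have hle : n1 * x ≤ n1 := mul_le_of_le_one_right hn1.le hx1
      have hn1N : n1 ≤ (N:ℝ) - 1 := hn1def.le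
      linarith
    rw [Finset.range_eq_Ico, ← Finset.sum_Ico_consecutive _ (Nat.zero_le (m+1)) hmN]
    have hmx : (m:ℝ)/n1 ≤ x := by rw [div_le_iff₀ hn1]; nlinarith
    have hxm : x ≤ ((m:ℝ)+1)/n1 := by rw [le_div_iff₀ hn1]; nlinarith
    have part1 : ∑ i ∈ Finset.Ico 0 (m+1), γ ^ (|x - (i:ℝ)/n1| / h) ≤ 1 / (1 - γ ^ s) := by
      rw [← Finset.range_eq_Ico]
      have he : ∀ i ∈ Finset.range (m+1), γ ^ (|x - (i:ℝ)/n1| / h)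
          = γ ^ ((x - (m:ℝ)/n1)/h + (((m+1:ℕ):ℝ) - 1 - (i:ℝ)) * s) := by
        intro i hi
        have hi' : (i:ℝ) ≤ (m:ℝ) := by
          exact_mod_cast Nat.lt_succ_iff.mp (Finset.mem_range.1 hi)
        have htle : (i:ℝ)/n1 ≤ x := by
          rw [div_le_iff₀ hn1]
          nlinarith
        rw [abs_of_nonneg (by linarith)]
        congr 1
        rw [hsdef]
        push_cast
        field_simp [hn1.ne', hh0.ne']
        try ring
      rw [Finset.sum_congr rfl he]
      exact geom_aux' γ hγ0 hγ1 _ s (div_nonneg (by linarith) hh0.le) hs (m+1)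
    have part2 : ∑ i ∈ Finset.Ico (m+1) N, γ ^ (|x - (i:ℝ)/n1| / h) ≤ 1 / (1 - γ ^ s) := by
      rw [Finset.sum_Ico_eq_sum_range]
      have he : ∀ j ∈ Finset.range (N - (m+1)), γ ^ (|x - ((m+1+j : ℕ):ℝ)/n1| / h)
          = γ ^ ((((m:ℝ)+1)/n1 - x)/h + (j:ℝ) * s) := by
        intro j _
        have hcast : ((m+1+j : ℕ):ℝ) = (m:ℝ) + 1 + (j:ℝ) := by push_cast; ring
        have hxle : x ≤ ((m+1+j : ℕ):ℝ)/n1 := by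
          rw [le_div_iff₀ hn1, hcast]
          nlinarith [Nat.cast_nonneg (α := ℝ) j]
        rw [abs_of_nonpos (by linarith), hcast]
        congr 1
        rw [hsdef]
        field_simp [hn1.ne', hh0.ne']
        try ring
      rw [Finset.sum_congr rfl he]
      exact geom_aux γ hγ0 hγ1 _ s (div_nonneg (by linarith) hh0.le) hs (N - (m+1))
    calc ∑ i ∈ Finset.Ico 0 (m+1), γ ^ (|x - (i:ℝ)/n1| / h)
          + ∑ i ∈ Finset.Ico (m+1) N, γ ^ (|x - (i:ℝ)/n1| / h)
        ≤ 1 / (1 - γ ^ s) + 1 / (1 - γ ^ s) := add_le_add part1 part2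
      _ = 2 / (1 - γ ^ s) := by ring
  -- total sum bound
  have hsum : ∑ i ∈ Finset.range N, gammaKer γ h x ((i:ℝ)/n1)
      ≤ (2 + 2/ε) * (1 / (1 - γ ^ s)) := by
    calc ∑ i ∈ Finset.range N, gammaKer γ h x ((i:ℝ)/n1)
        = (∑ i ∈ Finset.range N, γ ^ (|x - (i:ℝ)/n1| / h))
          + ((∑ i ∈ Finset.range N, γ ^ ((1 + x - (i:ℝ)/n1) / h))
            + (∑ i ∈ Finset.range N, γ ^ ((1 + (i:ℝ)/n1 - x) / h))) / (1 - γ ^ (1/h)) := by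
          rw [Finset.sum_congr rfl (fun i _ => hker i), Finset.sum_add_distrib,
            ← Finset.sum_div, Finset.sum_add_distrib]
      _ ≤ 2 / (1 - γ ^ s) + (1 / (1 - γ ^ s) + 1 / (1 - γ ^ s)) / ε := by
          exact add_le_add hSA (div_le_div₀
            (add_nonneg (one_div_nonneg.2 hds.le) (one_div_nonneg.2 hds.le))
            (add_le_add hSB hSC) hε hq1ε)
      _ = (2 + 2/ε) * (1 / (1 - γ ^ s)) := by
          field_simp [hε.ne', hds.ne']
          ring
  -- key scaling inequality
  have hkey : 1 / ((N:ℝ)*h) * (1 / (1 - γ ^ s)) ≤ 1 / ε := by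
    have hmain : ε ≤ (N:ℝ)*h * (1 - γ ^ s) := by
      rcases le_or_gt s 1 with hs1 | hs1
      · have hbern : γ ^ s ≤ s * γ + (1 - s) := by
          have := Real.geom_mean_le_arith_mean2_weighted hs.le (by linarith : (0:ℝ) ≤ 1 - s)
            hγ0.le zero_le_one (by ring)
          rw [Real.one_rpow, mul_one, mul_one] at this
          linarith
        have h3 : s * ε ≤ 1 - γ ^ s := by rw [hεdef]; nlinarith
        have h4 : (N:ℝ)*h*s = (N:ℝ)/n1 := by
          rw [hsdef]; field_simp [hn1.ne', hh0.ne']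
        have h5 : (1:ℝ) ≤ (N:ℝ)/n1 := by
          rw [le_div_iff₀ hn1, hn1def]; linarith
        calc ε = 1 * ε := (one_mul ε).symm
          _ ≤ ((N:ℝ)/n1) * ε := by gcongr
          _ = ((N:ℝ)*h) * (s * ε) := by rw [← h4]; ring
          _ ≤ ((N:ℝ)*h) * (1 - γ ^ s) := by
              apply mul_le_mul_of_nonneg_left h3 hNh0.le
      · have hγsγ : γ ^ s ≤ γ := by
          have := Real.rpow_le_rpow_of_exponent_ge hγ0 hγ1.le hs1.le
          rwa [Real.rpow_one] at this
        have h6 : ε ≤ 1 - γ ^ s := by rw [hεdef]; linarith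
        calc ε = 1 * ε := (one_mul ε).symm
          _ ≤ ((N:ℝ)*h) * (1 - γ ^ s) := mul_le_mul hNh h6 hε.le hNh0.le
    rw [div_mul_div_comm, one_mul]
    exact one_div_le_one_div_of_le hε hmain
  -- first bound
  have hfirst : 1 / ((N:ℝ)*h) * ∑ i ∈ Finset.range N, gammaKer γ h x ((i:ℝ)/n1) ≤ C1 := by
    calc 1 / ((N:ℝ)*h) * ∑ i ∈ Finset.range N, gammaKer γ h x ((i:ℝ)/n1)
        ≤ 1 / ((N:ℝ)*h) * ((2 + 2/ε) * (1 / (1 - γ ^ s))) := by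
          apply mul_le_mul_of_nonneg_left hsum (by positivity)
      _ = (2 + 2/ε) * (1 / ((N:ℝ)*h) * (1 / (1 - γ ^ s))) := by ring
      _ ≤ (2 + 2/ε) * (1 / ε) := by
          apply mul_le_mul_of_nonneg_left hkey
          have h2ε : 0 < 2/ε := div_pos two_pos hε
          linarith
      _ = C1 := by rw [hC1def]; ring
  -- pointwise bounds
  have hker_nonneg : ∀ i : ℕ, 0 ≤ gammaKer γ h x ((i:ℝ)/n1) := by
    intro i
    rw [hker i]
    have h1 : (0:ℝ) ≤ γ ^ (|x - (i:ℝ)/n1| / h) := Real.rpow_nonneg hγ0.le _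
    have h2 : (0:ℝ) ≤ γ ^ ((1 + x - (i:ℝ)/n1) / h) := Real.rpow_nonneg hγ0.le _
    have h3 : (0:ℝ) ≤ γ ^ ((1 + (i:ℝ)/n1 - x) / h) := Real.rpow_nonneg hγ0.le _
    positivity
  have hker_le : ∀ i ∈ Finset.range N, gammaKer γ h x ((i:ℝ)/n1) ≤ M := by
    intro i hi
    have hiN : (i:ℝ) ≤ n1 := by
      have h1 : i + 1 ≤ N := Finset.mem_range.1 hi
      have hi' : (i:ℝ) + 1 ≤ (N:ℝ) := by exact_mod_cast h1
      rw [hn1def]; linarith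
    have ht0 : (0:ℝ) ≤ (i:ℝ)/n1 := by positivity
    have ht1 : (i:ℝ)/n1 ≤ 1 := by rw [div_le_one hn1]; exact hiN
    rw [hker i, hMdef]
    have hA : γ ^ (|x - (i:ℝ)/n1| / h) ≤ 1 :=
      Real.rpow_le_one hγ0.le hγ1.le (div_nonneg (abs_nonneg _) hh0.le)
    have hB : γ ^ ((1 + x - (i:ℝ)/n1) / h) ≤ 1 :=
      Real.rpow_le_one hγ0.le hγ1.le (div_nonneg (by linarith) hh0.le)
    have hC : γ ^ ((1 + (i:ℝ)/n1 - x) / h) ≤ 1 :=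
      Real.rpow_le_one hγ0.le hγ1.le (div_nonneg (by linarith) hh0.le)
    have hB0 : (0:ℝ) ≤ γ ^ ((1 + x - (i:ℝ)/n1) / h) := Real.rpow_nonneg hγ0.le _
    have hC0 : (0:ℝ) ≤ γ ^ ((1 + (i:ℝ)/n1 - x) / h) := Real.rpow_nonneg hγ0.le _
    have hBC : (γ ^ ((1 + x - (i:ℝ)/n1) / h) + γ ^ ((1 + (i:ℝ)/n1 - x) / h)) / (1 - γ ^ (1/h))
        ≤ 2 / ε := div_le_div₀ (by positivity) (by linarith) hε hq1ε
    linarith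
  -- second bound
  have hsecond : 1 / ((N:ℝ)*h) * ∑ i ∈ Finset.range N, (gammaKer γ h x ((i:ℝ)/n1))^2
      ≤ M * C1 := by
    have hsq : ∑ i ∈ Finset.range N, (gammaKer γ h x ((i:ℝ)/n1))^2
        ≤ M * ∑ i ∈ Finset.range N, gammaKer γ h x ((i:ℝ)/n1) := by
      rw [Finset.mul_sum]
      apply Finset.sum_le_sum
      intro i hi
      rw [sq]
      exact mul_le_mul_of_nonneg_right (hker_le i hi) (hker_nonneg i)
    calc 1 / ((N:ℝ)*h) * ∑ i ∈ Finset.range N, (gammaKer γ h x ((i:ℝ)/n1))^2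
        ≤ 1 / ((N:ℝ)*h) * (M * ∑ i ∈ Finset.range N, gammaKer γ h x ((i:ℝ)/n1)) := by
          apply mul_le_mul_of_nonneg_left hsq (by positivity)
      _ = M * (1 / ((N:ℝ)*h) * ∑ i ∈ Finset.range N, gammaKer γ h x ((i:ℝ)/n1)) := by ring
      _ ≤ M * C1 := mul_le_mul_of_nonneg_left hfirst hM.le
  refine ⟨le_trans hfirst ?_, le_trans hsecond ?_⟩
  · nlinarith
  · nlinarith
end
end
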